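/- arXiv:1310.6426 — 5 statements merged into one kernel-verified Lean document; each statement's English description precedes it below -/
import Mathlib

section
/- If I is a graded ideal of the polynomial ring S = K[x_1,...,x_n] generated by quadrics and β_{2,j}^S(S/I) ≠ 0 for some j > 4, then S/I is not a Koszul algebra (i.e., the residue field K does not have a linear free resolution over S/I). -/
/-!
If `S ⧸ I` is Koszul, lift the first differentials `ℓ, A, B` of a linear resolution of `K` over
`S ⧸ I` to matrices of linear forms over `S` and chase through their double complex with the
Koszul complex of the variables. Because `I` is generated by quadrics, a homogeneous element of
`I` of degree `≥ 3` lies in `(X₁, …, Xₙ) • I`, and this is what makes the chase close up: every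
Koszul cycle with entries in `I` of degree `≥ 4` bounds a chain with entries in `I`, i.e.
`H₁(X; I)` vanishes in degrees `≥ 5`. Applied to the first syzygies of the quadrics, this writes
every syzygy of degree `≥ 3` as `∑ Xᵢ δᵢ` with syzygies `δᵢ` of one degree less, so the syzygies
are generated in internal degree `≤ 4`. A minimal second syzygy in internal degree `j > 4` would
then be a combination of the others with coefficients in `(X₁, …, Xₙ)`, which minimality forbids.
-/

open MvPolynomial

set_option synthInstance.maxHeartbeats 1000000
set_option maxHeartbeats 1000000

/-- The quotient `S/I` of a polynomial ring by a (homogeneous) ideal is *Koszul* if the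
residue field `K = (S/I)/m` admits a free resolution whose differentials are given by
matrices all of whose entries are (images of) linear forms.  The first condition says that
the image of the first differential is the maximal ideal `m` (generated by the variables),
i.e. the complex augments onto `K`; the second is exactness. -/
def IsKoszulQuot {K : Type*} [Field K] {σ : Type*} (I : Ideal (MvPolynomial σ K)) : Prop :=
  ∃ (b : ℕ → ℕ) (M : ∀ i, Matrix (Fin (b i)) (Fin (b (i + 1))) (MvPolynomial σ K ⧸ I)),
    b 0 = 1 ∧
    (∀ i k l, M i k l ∈ (Ideal.Quotient.mk I) '' {p : MvPolynomial σ K | p.IsHomogeneous 1}) ∧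
    LinearMap.range (Matrix.toLin' (M 0)) =
      Submodule.pi Set.univ (fun _ : Fin (b 0) =>
        (Ideal.map (Ideal.Quotient.mk I)
          (Ideal.span (Set.range (X : σ → MvPolynomial σ K))) :
            Ideal (MvPolynomial σ K ⧸ I))) ∧
    ∀ i, LinearMap.range (Matrix.toLin' (M (i + 1))) = LinearMap.ker (Matrix.toLin' (M i))

/-- A minimal graded free resolution of `S/I` over the polynomial ring `S`:
free modules with generators in prescribed internal degrees, differentials given by
homogeneous matrices of positive degree (minimality), exact, starting from
`F₀ = S → S/I → 0` (so the image of the first differential is `I`). -/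
structure MinGradedFreeRes {K : Type*} [Field K] {σ : Type*}
    (I : Ideal (MvPolynomial σ K)) where
  b : ℕ → ℕ
  deg : ∀ i, Fin (b i) → ℕ
  M : ∀ i, Matrix (Fin (b i)) (Fin (b (i + 1))) (MvPolynomial σ K)
  b_zero : b 0 = 1
  deg_zero : ∀ k, deg 0 k = 0
  homog : ∀ i k l, (M i k l).IsHomogeneous (deg (i + 1) l - deg i k)
  minimal : ∀ i k l, M i k l ≠ 0 → deg i k < deg (i + 1) l
  exact_zero : LinearMap.range (Matrix.toLin' (M 0)) =
    Submodule.pi Set.univ fun _ : Fin (b 0) => I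
  exact_succ : ∀ i, LinearMap.range (Matrix.toLin' (M (i + 1))) =
    LinearMap.ker (Matrix.toLin' (M i))

open Matrix

theorem Ideal.dotProduct_mem_of_left_mem {R m : Type*} [CommRing R] [Fintype m] {I : Ideal R}
    {a : m → R} (h : ∀ e, a e ∈ I) (v : m → R) : a ⬝ᵥ v ∈ I :=
  Ideal.sum_mem _ fun e _ => Ideal.mul_mem_right _ _ (h e)

theorem Ideal.dotProduct_mem_of_right_mem {R m : Type*} [CommRing R] [Fintype m] {I : Ideal R}
    (a : m → R) {v : m → R} (h : ∀ e, v e ∈ I) : a ⬝ᵥ v ∈ I :=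
  Ideal.sum_mem _ fun e _ => Ideal.mul_mem_left _ _ (h e)

namespace MvPolynomial

variable {σ R : Type*} [CommRing R]

section HomogeneousComponent

attribute [local instance] gradedAlgebra

theorem homogeneousComponent_mul_of_isHomogeneous_left {f : MvPolynomial σ R} {e : ℕ}
    (hf : f.IsHomogeneous e) (p : MvPolynomial σ R) (u : ℕ) :
    homogeneousComponent u (f * p) = if e ≤ u then f * homogeneousComponent (u - e) p else 0 := by
  simpa [← decomposition.decompose'_apply] using
    DirectSum.coe_decompose_mul_of_left_mem (homogeneousSubmodule σ R) u hf (b := p)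

theorem homogeneousComponent_sum_mul {ι : Type*} (s : Finset ι) {A : ι → MvPolynomial σ R}
    {e : ℕ} (hA : ∀ j ∈ s, (A j).IsHomogeneous e) (W : ι → MvPolynomial σ R) (u : ℕ) :
    homogeneousComponent (u + e) (∑ j ∈ s, A j * W j) =
      ∑ j ∈ s, A j * homogeneousComponent u (W j) := by
  rw [map_sum]
  refine Finset.sum_congr rfl fun j hj => ?_
  rw [homogeneousComponent_mul_of_isHomogeneous_left (hA j hj), if_pos (by omega),
    Nat.add_sub_cancel]

end HomogeneousComponent

theorem isHomogeneous_sum_mul {ι : Type*} (s : Finset ι) {A W : ι → MvPolynomial σ R}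
    {e d k : ℕ} (hA : ∀ j ∈ s, (A j).IsHomogeneous e) (hW : ∀ j ∈ s, (W j).IsHomogeneous d)
    (hk : e + d = k) : (∑ j ∈ s, A j * W j).IsHomogeneous k :=
  hk ▸ IsHomogeneous.sum _ _ _ fun j hj => (hA j hj).mul (hW j hj)

theorem mem_span_X_image_of_X_mul_mem {T : Set σ} {a : σ} (ha : a ∉ T) {p : MvPolynomial σ R}
    (h : X a * p ∈ Ideal.span (X '' T)) : p ∈ Ideal.span (X '' T) := by
  classical
  rw [mem_ideal_span_X_image] at h ⊢
  intro m hm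
  obtain ⟨i, hiT, hi⟩ := h (m + Finsupp.single a 1) (by
    rwa [mem_support_iff, mul_comm, coeff_mul_X, ← mem_support_iff])
  refine ⟨i, hiT, ?_⟩
  have hia : i ≠ a := fun h => ha (h ▸ hiT)
  simpa [Finsupp.single_apply, hia.symm] using hi

theorem exists_eq_sum_X_mul_of_mem_span {T : Finset σ} {p : MvPolynomial σ R}
    (h : p ∈ Ideal.span (X '' T)) : ∃ w : σ → MvPolynomial σ R, p = ∑ i ∈ T, X i * w i := by
  obtain ⟨w, hw⟩ := (Submodule.mem_span_image_finset_iff_exists_fun' _).mp h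
  exact ⟨w, by simp_rw [← hw, smul_eq_mul, mul_comm]⟩

theorem exists_eq_koszul_of_sum_X_mul_eq_zero (T : Finset σ) (p : σ → MvPolynomial σ R)
    (h : ∑ i ∈ T, X i * p i = 0) :
    ∃ z : σ → σ → MvPolynomial σ R, ∀ i ∈ T, p i = ∑ j ∈ T, X j * (z j i - z i j) := by
  classical
  induction T using Finset.induction_on generalizing p with
  | empty => exact ⟨0, by simp⟩
  | insert a T ha ih =>
    rw [Finset.sum_insert ha] at h
    obtain ⟨w, hw⟩ : ∃ w : σ → MvPolynomial σ R, p a = ∑ i ∈ T, X i * w i := by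
      refine exists_eq_sum_X_mul_of_mem_span (mem_span_X_image_of_X_mul_mem ha ?_)
      rw [eq_neg_of_add_eq_zero_left h]
      exact neg_mem (Submodule.sum_mem _ fun i hi =>
        Ideal.mul_mem_right _ _ (Ideal.subset_span ⟨i, hi, rfl⟩))
    obtain ⟨z, hz⟩ := ih (fun i => p i + X a * w i) (by
      simp only [mul_add, Finset.sum_add_distrib, mul_left_comm _ (X a), ← Finset.mul_sum, ← hw]
      linear_combination h)
    -- the new entries `z i a = w i` absorb the correction `X a * w i`
    refine ⟨fun j i => if j = a then 0 else if i = a then w j else z j i, ?_⟩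
    intro i hi
    have hne : ∀ j ∈ T, j ≠ a := fun j hj h => ha (h ▸ hj)
    rcases Finset.mem_insert.mp hi with rfl | hiT
    · rw [Finset.sum_insert ha, hw]
      simp only [if_true, sub_self, mul_zero, zero_add]
      exact Finset.sum_congr rfl fun j hj => by simp [hne j hj]
    · rw [Finset.sum_insert ha, ← add_sub_cancel_right (p i) (X a * w i), hz i hiT]
      simp only [if_true, hne i hiT, if_false, zero_sub, mul_neg]
      rw [sub_eq_neg_add]
      congr 1
      exact Finset.sum_congr rfl fun j hj => by simp [hne j hj]

section Koszul

variable [Fintype σ]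

noncomputable def koszul₁ : (σ → MvPolynomial σ R) →ₗ[MvPolynomial σ R] MvPolynomial σ R where
  toFun v := ∑ i, X i * v i
  map_add' v w := by simp [mul_add, Finset.sum_add_distrib]
  map_smul' a v := by simp [Finset.mul_sum, mul_left_comm]

/-- The Koszul 2-chain `∑ z j i • eⱼ ∧ eᵢ` is represented by the matrix `z`, which need not be
alternating. -/
noncomputable def koszul₂ :
    (σ → σ → MvPolynomial σ R) →ₗ[MvPolynomial σ R] (σ → MvPolynomial σ R) where
  toFun z i := ∑ j, X j * (z j i - z i j)
  map_add' z w := by ext i; simp [Finset.sum_add_distrib, mul_add, add_sub_add_comm]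
  map_smul' a z := by ext i; simp [Finset.mul_sum, mul_left_comm, mul_sub]

theorem koszul₁_apply (v : σ → MvPolynomial σ R) : koszul₁ v = ∑ i, X i * v i := rfl

theorem koszul₂_apply (z : σ → σ → MvPolynomial σ R) (i : σ) :
    koszul₂ z i = ∑ j, X j * (z j i - z i j) := rfl

@[simp]
theorem koszul₁_koszul₂ (z : σ → σ → MvPolynomial σ R) : koszul₁ (koszul₂ z) = 0 := by
  simp only [koszul₁_apply, koszul₂_apply, Finset.mul_sum, mul_sub, Finset.sum_sub_distrib]
  rw [Finset.sum_comm, sub_eq_zero]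
  exact Finset.sum_congr rfl fun i _ => Finset.sum_congr rfl fun j _ => by ring

theorem koszul₂_mul (κ ρ : σ → MvPolynomial σ R) :
    koszul₂ (fun i j => κ i * ρ j) = koszul₁ κ • ρ - koszul₁ ρ • κ := by
  funext i
  simp only [koszul₂_apply, koszul₁_apply, Pi.sub_apply, Pi.smul_apply, smul_eq_mul,
    Finset.sum_mul, ← Finset.sum_sub_distrib]
  exact Finset.sum_congr rfl fun j _ => by ring

theorem exists_koszul₂_eq_of_koszul₁_eq_zero {p : σ → MvPolynomial σ R} (h : koszul₁ p = 0) :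
    ∃ z, koszul₂ z = p := by
  obtain ⟨z, hz⟩ := exists_eq_koszul_of_sum_X_mul_eq_zero Finset.univ p h
  exact ⟨z, by funext i; exact (hz i (Finset.mem_univ i)).symm⟩

theorem homogeneousComponent_koszul₂ (z : σ → σ → MvPolynomial σ R) (u : ℕ) (i : σ) :
    homogeneousComponent (u + 1) (koszul₂ z i) =
      koszul₂ (fun j k => homogeneousComponent u (z j k)) i := by
  simp only [koszul₂_apply, ← map_sub]
  exact homogeneousComponent_sum_mul _ (fun j _ => isHomogeneous_X R j) _ u

theorem isHomogeneous_koszul₁ {v : σ → MvPolynomial σ R} {u : ℕ}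
    (hv : ∀ i, (v i).IsHomogeneous u) : (koszul₁ v).IsHomogeneous (u + 1) :=
  isHomogeneous_sum_mul _ (fun i _ => isHomogeneous_X R i) (fun i _ => hv i) (add_comm 1 u)

theorem isHomogeneous_koszul₂ {z : σ → σ → MvPolynomial σ R} {u : ℕ}
    (hz : ∀ j k, (z j k).IsHomogeneous u) (i : σ) : (koszul₂ z i).IsHomogeneous (u + 1) :=
  isHomogeneous_sum_mul _ (fun j _ => isHomogeneous_X R j) (fun j _ => (hz j i).sub (hz i j))
    (add_comm 1 u)

theorem IsHomogeneous.exists_eq_koszul₁ {p : MvPolynomial σ R} {u : ℕ}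
    (hp : p.IsHomogeneous (u + 1)) :
    ∃ v : σ → MvPolynomial σ R, (∀ i, (v i).IsHomogeneous u) ∧ p = koszul₁ v := by
  have hmem : p ∈ Ideal.span (X '' (Finset.univ : Finset σ)) := by
    refine mem_ideal_span_X_image.mpr fun m hm => ?_
    have hm0 : m ≠ 0 := by
      rintro rfl
      exact (mem_support_iff.mp hm) (hp.coeff_eq_zero (by simp))
    obtain ⟨i, hi⟩ := Finsupp.ne_iff.mp hm0
    exact ⟨i, Finset.mem_coe.mpr (Finset.mem_univ i), hi⟩
  obtain ⟨w, hw⟩ := exists_eq_sum_X_mul_of_mem_span hmem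
  refine ⟨fun i => homogeneousComponent u (w i), fun i => homogeneousComponent_isHomogeneous _ _,
    ?_⟩
  rw [← homogeneousComponent_eq_self hp, hw,
    homogeneousComponent_sum_mul _ (fun i _ => isHomogeneous_X R i)]
  rfl

theorem dotProduct_koszul₁ {m : Type*} [Fintype m] (a : m → MvPolynomial σ R)
    (v : σ → m → MvPolynomial σ R) :
    a ⬝ᵥ (fun e => koszul₁ fun i => v i e) = koszul₁ fun i => a ⬝ᵥ v i := by
  simp only [dotProduct, koszul₁_apply, Finset.mul_sum]
  rw [Finset.sum_comm]
  exact Finset.sum_congr rfl fun i _ => Finset.sum_congr rfl fun e _ => by ring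

theorem mulVec_koszul₁ {m k : Type*} [Fintype k] (L : Matrix m k (MvPolynomial σ R))
    (v : σ → k → MvPolynomial σ R) (c : m) :
    (L *ᵥ fun e => koszul₁ fun i => v i e) c = koszul₁ fun i => (L *ᵥ v i) c :=
  dotProduct_koszul₁ (L c) v

theorem dotProduct_koszul₂ {m : Type*} [Fintype m] (a : m → MvPolynomial σ R)
    (z : σ → σ → m → MvPolynomial σ R) (i : σ) :
    a ⬝ᵥ (fun e => koszul₂ (fun j k => z j k e) i) = koszul₂ (fun j k => a ⬝ᵥ z j k) i := by
  simp only [dotProduct, koszul₂_apply, Finset.mul_sum, ← Finset.sum_sub_distrib]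
  rw [Finset.sum_comm]
  exact Finset.sum_congr rfl fun j _ => Finset.sum_congr rfl fun e _ => by ring

theorem mulVec_koszul₂ {m k : Type*} [Fintype k] (L : Matrix m k (MvPolynomial σ R))
    (z : σ → σ → k → MvPolynomial σ R) (i : σ) (c : m) :
    (L *ᵥ fun e => koszul₂ (fun j k => z j k e) i) c = koszul₂ (fun j k => (L *ᵥ z j k) c) i :=
  dotProduct_koszul₂ (L c) z i

/-- `Ξ = ∑ c, κ c ∧ ∂(α c)` works, by the product rule `koszul₂_mul` and `∂ ∘ ∂ = 0`. -/
theorem exists_koszul₂_eq_koszul₂_dotProduct {m : Type*} [Fintype m]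
    {I : Ideal (MvPolynomial σ R)} {ℓ : m → MvPolynomial σ R} {κ : m → σ → MvPolynomial σ R} (hκ : ∀ c, koszul₁ (κ c) = ℓ c)
    (α : σ → σ → m → MvPolynomial σ R) (hα : ∀ c i, koszul₂ (fun j k => α j k c) i ∈ I) :
    ∃ Ξ : σ → σ → MvPolynomial σ R, (∀ j k, Ξ j k ∈ I) ∧
      koszul₂ Ξ = koszul₂ fun j k => ℓ ⬝ᵥ α j k := by
  set ρ := fun c => koszul₂ fun j k => α j k c
  refine ⟨fun j k => ∑ c, κ c j * ρ c k,
    fun j k => Ideal.sum_mem _ fun c _ => Ideal.mul_mem_left _ _ (hα c k), ?_⟩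
  funext i
  rw [← dotProduct_koszul₂]
  have hΞ : (fun j k => ∑ c, κ c j * ρ c k) = ∑ c, fun j k => κ c j * ρ c k := by
    funext j k
    simp only [Finset.sum_apply]
  simp [hΞ, map_sum, koszul₂_mul, ρ, dotProduct, Finset.sum_apply, hκ]

end Koszul

section HomogeneousGenerators

variable {Q : Set (MvPolynomial σ R)} {d : ℕ}

theorem exists_eq_sum_mul_of_mem_span {f : MvPolynomial σ R} (hf : f ∈ Ideal.span Q) :
    ∃ (t : Finset (MvPolynomial σ R)) (c : MvPolynomial σ R → MvPolynomial σ R),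
      ↑t ⊆ Q ∧ f = ∑ q ∈ t, q * c q := by
  obtain ⟨c, hcQ, rfl⟩ := Submodule.mem_span_set.mp hf
  exact ⟨c.support, c, hcQ, by simp [Finsupp.sum, mul_comm]⟩

theorem eq_zero_of_mem_span_of_isHomogeneous (hQ : ∀ q ∈ Q, q.IsHomogeneous d)
    {f : MvPolynomial σ R} (hf : f ∈ Ideal.span Q) {u : ℕ} (hfu : f.IsHomogeneous u)
    (hu : u < d) : f = 0 := by
  obtain ⟨t, c, htQ, rfl⟩ := exists_eq_sum_mul_of_mem_span hf
  rw [← homogeneousComponent_eq_self hfu, map_sum]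
  exact Finset.sum_eq_zero fun q hq => by
    rw [homogeneousComponent_mul_of_isHomogeneous_left (hQ q (htQ hq)), if_neg (by omega)]

theorem homogeneousComponent_mem_span (hQ : ∀ q ∈ Q, q.IsHomogeneous d) {f : MvPolynomial σ R}
    (hf : f ∈ Ideal.span Q) (u : ℕ) : homogeneousComponent u f ∈ Ideal.span Q :=
  letI := gradedAlgebra (σ := σ) (R := R)
  homogeneousComponent_mem_of_mem (Ideal.homogeneous_span _ _ fun q hq => ⟨d, hQ q hq⟩) hf u

theorem sub_mulVec_homogeneousComponent_mem (hQ : ∀ q ∈ Q, q.IsHomogeneous d) {m k : Type*}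
    [Fintype k] {L : Matrix m k (MvPolynomial σ R)} (hL : ∀ c e, (L c e).IsHomogeneous 1)
    {V : m → MvPolynomial σ R} {u : ℕ} (hV : ∀ c, (V c).IsHomogeneous (u + 1))
    {W : k → MvPolynomial σ R} (h : ∀ c, V c - (L *ᵥ W) c ∈ Ideal.span Q) (c : m) :
    V c - (L *ᵥ fun e => homogeneousComponent u (W e)) c ∈ Ideal.span Q := by
  have := homogeneousComponent_mem_span hQ (h c) (u + 1)
  rwa [map_sub, homogeneousComponent_eq_self (hV c), mulVec, dotProduct,
    homogeneousComponent_sum_mul _ fun e _ => hL c e] at this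

variable [Fintype σ]

theorem exists_eq_koszul₁_of_mem_span (hQ : ∀ q ∈ Q, q.IsHomogeneous d)
    {f : MvPolynomial σ R} (hf : f ∈ Ideal.span Q) {u : ℕ} (hfu : f.IsHomogeneous (u + d + 1)) :
    ∃ q : σ → MvPolynomial σ R, (∀ i, q i ∈ Ideal.span Q) ∧ f = koszul₁ q := by
  obtain ⟨t, c, htQ, rfl⟩ := exists_eq_sum_mul_of_mem_span hf
  have hv : ∀ q, ∃ v : σ → MvPolynomial σ R, homogeneousComponent (u + 1) (c q) = koszul₁ v :=
    fun q => ((homogeneousComponent_isHomogeneous _ _).exists_eq_koszul₁).imp fun _ h => h.2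
  choose v hv using hv
  refine ⟨fun i => ∑ q ∈ t, v q i * q, fun i => Ideal.sum_mem _ fun q hq =>
    Ideal.mul_mem_left _ _ (Ideal.subset_span (htQ hq)), ?_⟩
  rw [← homogeneousComponent_eq_self hfu, add_right_comm,
    homogeneousComponent_sum_mul _ fun q hq => hQ q (htQ hq)]
  simp only [hv, koszul₁_apply, Finset.mul_sum]
  rw [Finset.sum_comm]
  exact Finset.sum_congr rfl fun i _ => Finset.sum_congr rfl fun q _ => by ring

theorem exists_sub_koszul₂_mem (hQ : ∀ q ∈ Q, q.IsHomogeneous d)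
    {v : σ → MvPolynomial σ R} {u : ℕ} (hv : ∀ i, (v i).IsHomogeneous (u + d))
    (h : koszul₁ v ∈ Ideal.span Q) : ∃ z, ∀ i, v i - koszul₂ z i ∈ Ideal.span Q := by
  obtain ⟨q, hqI, hq⟩ := exists_eq_koszul₁_of_mem_span hQ h (isHomogeneous_koszul₁ hv)
  obtain ⟨z, hz⟩ :=
    exists_koszul₂_eq_of_koszul₁_eq_zero (p := v - q) (by rw [map_sub, hq, sub_self])
  exact ⟨z, fun i => by simpa [hz] using hqI i⟩

end HomogeneousGenerators

end MvPolynomial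

namespace MinGradedFreeRes

variable {K σ : Type*} [Field K]

section General

variable {I : Ideal (MvPolynomial σ K)} (F : MinGradedFreeRes I)

/-- Minimality: `v` is in the image of `F.M (i + 1)`, whose entries have no constant term. -/
theorem constantCoeff_eq_zero_of_mulVec_eq_zero {i : ℕ}
    {v : Fin (F.b (i + 1)) → MvPolynomial σ K} (hv : F.M i *ᵥ v = 0) (k : Fin (F.b (i + 1))) : constantCoeff (v k) = 0 := by
  have hker : v ∈ LinearMap.ker (Matrix.toLin' (F.M i)) := by simpa using hv
  rw [← F.exact_succ i] at hker
  obtain ⟨w, rfl⟩ := hker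
  simp only [Matrix.toLin'_apply, mulVec, dotProduct, map_sum, map_mul]
  refine Finset.sum_eq_zero fun m _ => ?_
  by_cases hM : F.M (i + 1) k m = 0
  · simp [hM]
  · have hdeg := F.minimal (i + 1) k m hM
    have h0 : coeff 0 (F.M (i + 1) k m) = 0 :=
      (F.homog (i + 1) k m).coeff_eq_zero (by simp; omega)
    rw [constantCoeff_eq, h0, zero_mul]

instance : Unique (Fin (F.b 0)) := F.b_zero ▸ inferInstance

def gen (l : Fin (F.b 1)) : MvPolynomial σ K := F.M 0 default l

theorem mulVec_zero_apply (v : Fin (F.b 1) → MvPolynomial σ K) (a : Fin (F.b 0)) :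
    (F.M 0 *ᵥ v) a = F.gen ⬝ᵥ v := by
  rw [Unique.eq_default a]
  rfl

theorem mem_iff_exists_gen_dotProduct {f : MvPolynomial σ K} :
    f ∈ I ↔ ∃ v, F.gen ⬝ᵥ v = f := by
  have h := congrArg (fun N => (fun _ => f) ∈ N) F.exact_zero
  simp only [Submodule.mem_pi, Set.mem_univ, forall_const, LinearMap.mem_range,
    Matrix.toLin'_apply, eq_iff_iff] at h
  simpa [funext_iff, F.mulVec_zero_apply] using h.symm

theorem gen_dotProduct_eq_zero_iff {v : Fin (F.b 1) → MvPolynomial σ K} :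
    F.gen ⬝ᵥ v = 0 ↔ ∃ w, F.M 1 *ᵥ w = v := by
  have h : F.gen ⬝ᵥ v = 0 ↔ v ∈ LinearMap.ker (Matrix.toLin' (F.M 0)) := by
    simp [funext_iff, F.mulVec_zero_apply]
  rw [h, ← F.exact_succ 0]
  simp

theorem constantCoeff_eq_zero_of_gen_dotProduct_eq_zero {v : Fin (F.b 1) → MvPolynomial σ K}
    (hv : F.gen ⬝ᵥ v = 0) (l : Fin (F.b 1)) : constantCoeff (v l) = 0 :=
  F.constantCoeff_eq_zero_of_mulVec_eq_zero (i := 0) (funext fun a => by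
    rw [F.mulVec_zero_apply, hv, Pi.zero_apply]) l

theorem isHomogeneous_gen (l : Fin (F.b 1)) : (F.gen l).IsHomogeneous (F.deg 1 l) := by
  simpa [F.deg_zero, gen] using F.homog 0 default l

theorem gen_mem (l : Fin (F.b 1)) : F.gen l ∈ I :=
  F.mem_iff_exists_gen_dotProduct.mpr ⟨Pi.single l 1, by simp⟩

theorem gen_ne_zero (l : Fin (F.b 1)) : F.gen l ≠ 0 := by
  intro h
  have := F.constantCoeff_eq_zero_of_gen_dotProduct_eq_zero (v := Pi.single l 1)
    (by simp [h]) l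
  simp at this

end General

section Quadrics

variable [Fintype σ] {Q : Set (MvPolynomial σ K)} (hQ : ∀ q ∈ Q, q.IsHomogeneous 2)
  (F : MinGradedFreeRes (Ideal.span Q))
include hQ

/-- A generator of degree `≥ 3` would lie in `(X₁, …, Xₙ) • I`, contradicting minimality. -/
theorem deg_one_eq_two (l : Fin (F.b 1)) : F.deg 1 l = 2 := by
  have hg := F.isHomogeneous_gen l
  obtain hlt | h2 | hgt : F.deg 1 l < 2 ∨ F.deg 1 l = 2 ∨ 2 < F.deg 1 l := by omega
  · exact absurd (eq_zero_of_mem_span_of_isHomogeneous hQ (F.gen_mem l) hg hlt) (F.gen_ne_zero l)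
  · exact h2
  · obtain ⟨u, hu⟩ : ∃ u, F.deg 1 l = u + 2 + 1 := ⟨F.deg 1 l - 3, by omega⟩
    obtain ⟨q, hqI, hq⟩ := exists_eq_koszul₁_of_mem_span hQ (F.gen_mem l) (hu ▸ hg)
    choose w hw using fun i => F.mem_iff_exists_gen_dotProduct.mp (hqI i)
    set W : Fin (F.b 1) → MvPolynomial σ K := ∑ i, (X i : MvPolynomial σ K) • w i
    have hsyz : F.gen ⬝ᵥ (Pi.single l 1 - W) = 0 := by
      rw [dotProduct_sub, dotProduct_single, mul_one, dotProduct_sum, hq, koszul₁_apply,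
        sub_eq_zero]
      simp [dotProduct_smul, hw]
    have := F.constantCoeff_eq_zero_of_gen_dotProduct_eq_zero hsyz l
    simp [W] at this

theorem isHomogeneous_gen_two (l : Fin (F.b 1)) : (F.gen l).IsHomogeneous 2 :=
  F.deg_one_eq_two hQ l ▸ F.isHomogeneous_gen l

theorem exists_gen_dotProduct_eq {f : MvPolynomial σ K} (hf : f ∈ Ideal.span Q) {u : ℕ}
    (hfu : f.IsHomogeneous (u + 2)) :
    ∃ v : Fin (F.b 1) → MvPolynomial σ K, (∀ l, (v l).IsHomogeneous u) ∧ F.gen ⬝ᵥ v = f := by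
  obtain ⟨w, rfl⟩ := F.mem_iff_exists_gen_dotProduct.mp hf
  refine ⟨fun l => homogeneousComponent u (w l), fun l => homogeneousComponent_isHomogeneous _ _,
    ?_⟩
  rw [← homogeneousComponent_eq_self hfu]
  exact (homogeneousComponent_sum_mul _ (fun l _ => F.isHomogeneous_gen_two hQ l) w u).symm

theorem exists_mulVec_eq_of_gen_dotProduct_eq_zero {s : Fin (F.b 1) → MvPolynomial σ K} {u : ℕ}
    (hs : ∀ l, (s l).IsHomogeneous u) (hsyz : F.gen ⬝ᵥ s = 0) :
    ∃ h, (∀ m, h m ≠ 0 → F.deg 2 m ≤ u + 2) ∧ F.M 1 *ᵥ h = s := by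
  classical
  obtain ⟨w, rfl⟩ := F.gen_dotProduct_eq_zero_iff.mp hsyz
  refine ⟨fun m => if F.deg 2 m ≤ u + 2 then homogeneousComponent (u + 2 - F.deg 2 m) (w m) else 0,
    fun m hm => by_contra fun h => hm (if_neg h), ?_⟩
  funext l
  rw [← homogeneousComponent_eq_self (hs l)]
  simp only [mulVec, dotProduct, map_sum]
  refine Finset.sum_congr rfl fun m _ => ?_
  by_cases hM0 : F.M 1 l m = 0
  · simp [hM0]
  have hdeg := F.minimal 1 l m hM0
  have hM : (F.M 1 l m).IsHomogeneous (F.deg 2 m - 2) := by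
    simpa [F.deg_one_eq_two hQ l] using F.homog 1 l m
  replace hdeg : 2 < F.deg 2 m := by simpa [F.deg_one_eq_two hQ l] using hdeg
  rw [homogeneousComponent_mul_of_isHomogeneous_left hM]
  by_cases hle : F.deg 2 m ≤ u + 2
  · rw [if_pos (by omega), show u - (F.deg 2 m - 2) = u + 2 - F.deg 2 m by omega]
    simp [hle]
  · rw [if_neg (by omega)]
    simp [hle]

end Quadrics

end MinGradedFreeRes

section LinearResolutionLift

variable {K σ : Type*} [Field K]

/-- Matrices of linear forms over `S` lifting the first three differentials `ℓ`, `A`, `B` of a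
linear free resolution of `K` over `S ⧸ I`; the conditions are read modulo `I`. -/
structure LinearResolutionLift (I : Ideal (MvPolynomial σ K)) where
  b₁ : ℕ
  b₂ : ℕ
  b₃ : ℕ
  ℓ : Fin b₁ → MvPolynomial σ K
  A : Matrix (Fin b₁) (Fin b₂) (MvPolynomial σ K)
  B : Matrix (Fin b₂) (Fin b₃) (MvPolynomial σ K)
  isHomogeneous_ℓ : ∀ c, (ℓ c).IsHomogeneous 1
  isHomogeneous_A : ∀ c e, (A c e).IsHomogeneous 1
  isHomogeneous_B : ∀ e e', (B e e').IsHomogeneous 1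
  exists_X_sub_mem : ∀ i, ∃ w, X i - ℓ ⬝ᵥ w ∈ I
  vecMul_mem : ∀ e, (ℓ ᵥ* A) e ∈ I
  mul_mem : ∀ c e', (A * B) c e' ∈ I
  exact₁ : ∀ V, ℓ ⬝ᵥ V ∈ I → ∃ W, ∀ c, V c - (A *ᵥ W) c ∈ I
  exact₂ : ∀ V, (∀ c, (A *ᵥ V) c ∈ I) → ∃ W, ∀ e, V e - (B *ᵥ W) e ∈ I

variable {I : Ideal (MvPolynomial σ K)}

theorem Ideal.exists_sub_mulVec_mem_of_mk_mem_range {R m k : Type*} [CommRing R] {I : Ideal R}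
    [Fintype k] [DecidableEq k] (L : Matrix m k R) {V : m → R}
    (h : (fun c => Ideal.Quotient.mk I (V c)) ∈
      LinearMap.range (Matrix.toLin' (L.map (Ideal.Quotient.mk I)))) :
    ∃ W, ∀ c, V c - (L *ᵥ W) c ∈ I := by
  obtain ⟨W', hW'⟩ := h
  choose W hW using fun e => Ideal.Quotient.mk_surjective (W' e)
  refine ⟨W, fun c => ?_⟩
  rw [← Ideal.Quotient.eq_zero_iff_mem, map_sub, RingHom.map_mulVec, sub_eq_zero,
    show Ideal.Quotient.mk I ∘ W = W' from funext hW, ← Matrix.toLin'_apply, hW']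

theorem IsKoszulQuot.nonempty_linearResolutionLift (h : IsKoszulQuot I) :
    Nonempty (LinearResolutionLift I) := by
  obtain ⟨b, M, hb0, hlin, hrange, hexact⟩ := h
  have hlift : ∀ i, ∃ L : Matrix (Fin (b i)) (Fin (b (i + 1))) (MvPolynomial σ K),
      (∀ k l, (L k l).IsHomogeneous 1) ∧ M i = L.map (Ideal.Quotient.mk I) := fun i => by
    choose L hL hLM using hlin i
    exact ⟨L, hL, by ext k l; exact (hLM k l).symm⟩
  choose L hL hM using hlift
  have : Unique (Fin (b 0)) := hb0 ▸ inferInstance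
  have hmul : ∀ i k e, (L i * L (i + 1)) k e ∈ I := fun i k e => by
    have h0 : M i * M (i + 1) = 0 := by
      rw [← Matrix.toLin'.map_eq_zero_iff, Matrix.toLin'_mul]
      exact LinearMap.range_le_ker_iff.mp (hexact i).le
    rw [← Ideal.Quotient.eq_zero_iff_mem, RingHom.map_matrix_mul, ← hM, ← hM, h0]
    rfl
  have hker : ∀ i (V : Fin (b (i + 1)) → MvPolynomial σ K), (∀ k, (L i *ᵥ V) k ∈ I) →
      ∃ W, ∀ c, V c - (L (i + 1) *ᵥ W) c ∈ I := fun i V hV => by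
    refine Ideal.exists_sub_mulVec_mem_of_mk_mem_range _ ?_
    rw [← hM, hexact i, LinearMap.mem_ker, Matrix.toLin'_apply, hM]
    funext k
    exact (RingHom.map_mulVec _ _ _ k).symm.trans (Ideal.Quotient.eq_zero_iff_mem.mpr (hV k))
  refine ⟨⟨b 1, b 2, b 3, L 0 default, L 1, L 2, hL 0 default, hL 1, hL 2, fun i => ?_,
    hmul 0 default, hmul 1, fun V hV => hker 0 V fun k => ?_, hker 1⟩⟩
  · obtain ⟨W, hW⟩ := Ideal.exists_sub_mulVec_mem_of_mk_mem_range (L 0) (V := fun _ => X i) (by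
      rw [← hM, hrange, Submodule.mem_pi]
      exact fun _ _ => Ideal.mem_map_of_mem _ (Ideal.subset_span ⟨i, rfl⟩))
    exact ⟨W, hW default⟩
  · rwa [Unique.eq_default k]

end LinearResolutionLift

namespace LinearResolutionLift

variable {K σ : Type*} [Field K] {Q : Set (MvPolynomial σ K)}
  (D : LinearResolutionLift (Ideal.span Q))

theorem exists_isHomogeneous_sub_mulVec_A_mem {d : ℕ} (hQ : ∀ q ∈ Q, q.IsHomogeneous d)
    {V : Fin D.b₁ → MvPolynomial σ K} {u : ℕ} (hV : ∀ c, (V c).IsHomogeneous (u + 1))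
    (h : D.ℓ ⬝ᵥ V ∈ Ideal.span Q) :
    ∃ W, (∀ e, (W e).IsHomogeneous u) ∧ ∀ c, V c - (D.A *ᵥ W) c ∈ Ideal.span Q := by
  obtain ⟨W, hW⟩ := D.exact₁ V h
  exact ⟨_, fun e => homogeneousComponent_isHomogeneous u (W e),
    sub_mulVec_homogeneousComponent_mem hQ D.isHomogeneous_A hV hW⟩

theorem exists_isHomogeneous_sub_mulVec_B_mem {d : ℕ} (hQ : ∀ q ∈ Q, q.IsHomogeneous d)
    {V : Fin D.b₂ → MvPolynomial σ K} {u : ℕ} (hV : ∀ e, (V e).IsHomogeneous (u + 1))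
    (h : ∀ c, (D.A *ᵥ V) c ∈ Ideal.span Q) :
    ∃ W, (∀ e', (W e').IsHomogeneous u) ∧ ∀ e, V e - (D.B *ᵥ W) e ∈ Ideal.span Q := by
  obtain ⟨W, hW⟩ := D.exact₂ V h
  exact ⟨_, fun e => homogeneousComponent_isHomogeneous u (W e),
    sub_mulVec_homogeneousComponent_mem hQ D.isHomogeneous_B hV hW⟩

section Quadrics

variable (hQ : ∀ q ∈ Q, q.IsHomogeneous 2)
include hQ

/-- The entries of `ℓ` span the linear forms, since `I` contains none. -/
theorem exists_dotProduct_eq_X (i : σ) :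
    ∃ κ : Fin D.b₁ → MvPolynomial σ K, (∀ c, (κ c).IsHomogeneous 0) ∧ D.ℓ ⬝ᵥ κ = X i := by
  obtain ⟨w, hw⟩ := D.exists_X_sub_mem i
  have hmem := homogeneousComponent_mem_span hQ hw (0 + 1)
  rw [map_sub, homogeneousComponent_eq_self (isHomogeneous_X K i), dotProduct,
    homogeneousComponent_sum_mul _ fun c _ => D.isHomogeneous_ℓ c] at hmem
  have hdeg : (X i - ∑ c, D.ℓ c * homogeneousComponent 0 (w c)).IsHomogeneous 1 :=
    (isHomogeneous_X K i).sub (isHomogeneous_sum_mul _ (fun c _ => D.isHomogeneous_ℓ c)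
      (fun c _ => homogeneousComponent_isHomogeneous 0 (w c)) rfl)
  exact ⟨fun c => homogeneousComponent 0 (w c), fun c => homogeneousComponent_isHomogeneous _ _,
    (sub_eq_zero.mp (eq_zero_of_mem_span_of_isHomogeneous hQ hmem hdeg one_lt_two)).symm⟩

variable [Fintype σ]

theorem exists_dotProduct_eq {f : MvPolynomial σ K} {u : ℕ}
    (hf : f.IsHomogeneous (u + 1)) :
    ∃ w : Fin D.b₁ → MvPolynomial σ K, (∀ c, (w c).IsHomogeneous u) ∧ D.ℓ ⬝ᵥ w = f := by
  obtain ⟨v, hvh, rfl⟩ := hf.exists_eq_koszul₁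
  choose κ hκh hκ using D.exists_dotProduct_eq_X hQ
  refine ⟨fun c => ∑ i, v i * κ i c, fun c => isHomogeneous_sum_mul _ (fun i _ => hvh i)
    (fun i _ => hκh i c) (add_zero u), ?_⟩
  simp only [koszul₁_apply, ← hκ, dotProduct, Finset.mul_sum, Finset.sum_mul]
  rw [Finset.sum_comm]
  exact Finset.sum_congr rfl fun i _ => Finset.sum_congr rfl fun c _ => by ring

theorem exists_sub_mulVec_A_mem_and_koszul₁_mem {β : Fin D.b₁ → σ → MvPolynomial σ K} {d : ℕ}
    (hβ : ∀ c i, (β c i).IsHomogeneous (d + 3)) (hcyc : ∀ c, koszul₁ (β c) = 0)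
    (hℓ : ∀ i, D.ℓ ⬝ᵥ (fun c => β c i) ∈ Ideal.span Q) :
    ∃ α : σ → Fin D.b₂ → MvPolynomial σ K, (∀ i e, (α i e).IsHomogeneous (d + 2)) ∧
      (∀ c i, β c i - (D.A *ᵥ α i) c ∈ Ideal.span Q) ∧
      ∀ e, koszul₁ (fun i => α i e) ∈ Ideal.span Q := by
  choose α₁ hα₁h hα₁ using fun i => D.exists_isHomogeneous_sub_mulVec_A_mem hQ (hβ · i) (hℓ i)
  have hβ₂ : ∀ c, (D.A *ᵥ fun e => koszul₁ fun i => α₁ i e) c ∈ Ideal.span Q := fun c => by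
    have h : koszul₁ (β c - fun i => (D.A *ᵥ α₁ i) c) ∈ Ideal.span Q :=
      Ideal.dotProduct_mem_of_right_mem _ fun i => hα₁ i c
    rwa [map_sub, hcyc c, zero_sub, neg_mem_iff, ← mulVec_koszul₁] at h
  obtain ⟨α₂, hα₂h, hα₂⟩ := D.exists_isHomogeneous_sub_mulVec_B_mem hQ
    (fun e => isHomogeneous_koszul₁ (hα₁h · e)) hβ₂
  choose μ hμh hμ using fun e' => (hα₂h e').exists_eq_koszul₁
  -- correcting by `B μ` changes `A α₁` only by `(A * B) μ`, which lies in `I`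
  refine ⟨fun i => α₁ i - D.B *ᵥ fun e' => μ e' i,
    fun i e => (hα₁h i e).sub (isHomogeneous_sum_mul _ (fun e' _ => D.isHomogeneous_B e e')
      (fun e' _ => hμh e' i) (by omega)), fun c i => ?_, fun e => ?_⟩
  · rw [mulVec_sub, mulVec_mulVec, Pi.sub_apply, sub_sub_eq_add_sub, add_sub_right_comm]
    exact Ideal.add_mem _ (hα₁ i c) (Ideal.dotProduct_mem_of_left_mem (D.mul_mem c) _)
  · change koszul₁ ((fun i => α₁ i e) - fun i => (D.B *ᵥ fun e' => μ e' i) e) ∈ _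
    rw [map_sub, ← mulVec_koszul₁]
    simpa [← hμ] using hα₂ e

theorem exists_dotProduct_sub_mem_and_koszul₂_mem {α : σ → σ → Fin D.b₁ → MvPolynomial σ K}
    {d : ℕ} (hα : ∀ j k c, (α j k c).IsHomogeneous (d + 2))
    (hℓ : ∀ i, D.ℓ ⬝ᵥ (fun c => koszul₂ (fun j k => α j k c) i) ∈ Ideal.span Q) :
    ∃ α' : σ → σ → Fin D.b₁ → MvPolynomial σ K,
      (∀ j k, D.ℓ ⬝ᵥ α j k - D.ℓ ⬝ᵥ α' j k ∈ Ideal.span Q) ∧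
      ∀ c i, koszul₂ (fun j k => α' j k c) i ∈ Ideal.span Q := by
  obtain ⟨α₂, hα₂h, hα₂, hα₂I⟩ := D.exists_sub_mulVec_A_mem_and_koszul₁_mem hQ
    (β := fun c i => koszul₂ (fun j k => α j k c) i)
    (fun c i => isHomogeneous_koszul₂ (fun j k => hα j k c) i) (fun c => koszul₁_koszul₂ _) hℓ
  -- the degree bound enters here: `∂ α₂` has degree `≥ 3`, so it lies in `(X₁, …, Xₙ) • I`
  choose ν hν using fun e => exists_sub_koszul₂_mem hQ (hα₂h · e) (hα₂I e)
  refine ⟨fun j k => α j k - D.A *ᵥ fun e => ν e j k, fun j k => ?_, fun c i => ?_⟩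
  · rw [dotProduct_sub, sub_sub_cancel, dotProduct_mulVec]
    exact Ideal.dotProduct_mem_of_left_mem D.vecMul_mem _
  · have hsplit : koszul₂ (fun j k => (α j k - D.A *ᵥ fun e => ν e j k) c) i =
        (koszul₂ (fun j k => α j k c) i - (D.A *ᵥ α₂ i) c) +
          (D.A *ᵥ (α₂ i - fun e => koszul₂ (ν e) i)) c := by
      change koszul₂ ((fun j k => α j k c) - fun j k => (D.A *ᵥ fun e => ν e j k) c) i = _
      rw [map_sub, Pi.sub_apply, ← mulVec_koszul₂, mulVec_sub, Pi.sub_apply]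
      ring
    rw [hsplit]
    exact Ideal.add_mem _ (hα₂ c i) (Ideal.dotProduct_mem_of_right_mem _ fun e => hν e i)

include D in
/-- Vanishing of `H₁(X₁, …, Xₙ; I)` in degrees `≥ 5`. -/
theorem exists_koszul₂_eq {ξ : σ → MvPolynomial σ K} {d : ℕ} (hξI : ∀ i, ξ i ∈ Ideal.span Q)
    (hξ : ∀ i, (ξ i).IsHomogeneous (d + 4)) (hcyc : koszul₁ ξ = 0) :
    ∃ Ξ : σ → σ → MvPolynomial σ K,
      (∀ j k, Ξ j k ∈ Ideal.span Q ∧ (Ξ j k).IsHomogeneous (d + 3)) ∧ koszul₂ Ξ = ξ := by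
  obtain ⟨Θ, hΘ⟩ := exists_koszul₂_eq_of_koszul₁_eq_zero hcyc
  choose α hαh hα using fun j k =>
    D.exists_dotProduct_eq hQ (homogeneousComponent_isHomogeneous (d + 2 + 1) (Θ j k))
  have hξα : koszul₂ (fun j k => D.ℓ ⬝ᵥ α j k) = ξ := by
    funext i
    simp only [hα]
    rw [← homogeneousComponent_koszul₂, hΘ, homogeneousComponent_eq_self (hξ i)]
  obtain ⟨α', hαα', hα'⟩ := D.exists_dotProduct_sub_mem_and_koszul₂_mem hQ hαh
    (fun i => by rw [dotProduct_koszul₂, hξα]; exact hξI i)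
  choose κ hκ using fun c =>
    ((D.isHomogeneous_ℓ c).exists_eq_koszul₁ (u := 0)).imp fun _ h => h.2.symm
  obtain ⟨Ξ₁, hΞ₁I, hΞ₁⟩ := exists_koszul₂_eq_koszul₂_dotProduct hκ α' hα'
  set Ξ₀ : σ → σ → MvPolynomial σ K := (fun j k => D.ℓ ⬝ᵥ α j k - D.ℓ ⬝ᵥ α' j k) + Ξ₁
  have hΞ₀ : koszul₂ Ξ₀ = ξ := by
    rw [map_add, hΞ₁, ← map_add, ← hξα]
    congr 1
    funext j k
    simp
  refine ⟨fun j k => homogeneousComponent (d + 3) (Ξ₀ j k), fun j k =>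
    ⟨homogeneousComponent_mem_span hQ (Ideal.add_mem _ (hαα' j k) (hΞ₁I j k)) _,
      homogeneousComponent_isHomogeneous _ _⟩, ?_⟩
  funext i
  rw [← homogeneousComponent_koszul₂, hΞ₀, homogeneousComponent_eq_self (hξ i)]

end Quadrics

end LinearResolutionLift

namespace MinGradedFreeRes

variable {K σ : Type*} [Field K] [Fintype σ] {Q : Set (MvPolynomial σ K)}
  (hQ : ∀ q ∈ Q, q.IsHomogeneous 2) (F : MinGradedFreeRes (Ideal.span Q))
  (D : LinearResolutionLift (Ideal.span Q))
include hQ D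

theorem exists_koszul₁_eq_of_gen_dotProduct_eq_zero {s : Fin (F.b 1) → MvPolynomial σ K} {d : ℕ}
    (hs : ∀ l, (s l).IsHomogeneous (d + 3)) (hsyz : F.gen ⬝ᵥ s = 0) :
    ∃ δ : σ → Fin (F.b 1) → MvPolynomial σ K, (∀ i l, (δ i l).IsHomogeneous (d + 2)) ∧
      (∀ i, F.gen ⬝ᵥ δ i = 0) ∧ ∀ l, koszul₁ (fun i => δ i l) = s l := by
  choose v hvh hv using fun l => (hs l).exists_eq_koszul₁
  obtain ⟨Ξ, hΞ, hΞξ⟩ := D.exists_koszul₂_eq hQ (ξ := fun i => F.gen ⬝ᵥ fun l => v l i) (d := d)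
    (fun i => F.mem_iff_exists_gen_dotProduct.mpr ⟨_, rfl⟩)
    (fun i => isHomogeneous_sum_mul _ (fun l _ => F.isHomogeneous_gen_two hQ l)
      (fun l _ => hvh l i) (by omega))
    (by rw [← dotProduct_koszul₁, ← hsyz]; simp only [← hv])
  choose φ hφh hφ using fun j k => F.exists_gen_dotProduct_eq hQ (hΞ j k).1 (hΞ j k).2
  refine ⟨fun i l => v l i - koszul₂ (fun j k => φ j k l) i,
    fun i l => (hvh l i).sub (isHomogeneous_koszul₂ (fun j k => hφh j k l) i), fun i => ?_,
    fun l => ?_⟩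
  · change F.gen ⬝ᵥ ((fun l => v l i) - fun l => koszul₂ (fun j k => φ j k l) i) = 0
    rw [dotProduct_sub, dotProduct_koszul₂]
    simp [hφ, hΞξ]
  · change koszul₁ (v l - koszul₂ fun j k => φ j k l) = s l
    rw [map_sub, koszul₁_koszul₂, sub_zero, hv]

theorem exists_mulVec_eq_with_deg_le_four (u : ℕ) {s : Fin (F.b 1) → MvPolynomial σ K}
    (hs : ∀ l, (s l).IsHomogeneous u) (hsyz : F.gen ⬝ᵥ s = 0) :
    ∃ h, (∀ m, h m ≠ 0 → F.deg 2 m ≤ 4) ∧ F.M 1 *ᵥ h = s := by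
  induction u using Nat.strong_induction_on generalizing s with
  | _ u ih =>
    obtain hu | ⟨d, rfl⟩ : u ≤ 2 ∨ ∃ d, u = d + 3 :=
      (Nat.lt_or_ge u 3).imp (by omega) fun h => ⟨u - 3, by omega⟩
    · obtain ⟨h, hh, hMh⟩ := F.exists_mulVec_eq_of_gen_dotProduct_eq_zero hQ hs hsyz
      exact ⟨h, fun m hm => (hh m hm).trans (by omega), hMh⟩
    · obtain ⟨δ, hδh, hδ, hδs⟩ :=
        F.exists_koszul₁_eq_of_gen_dotProduct_eq_zero hQ D hs hsyz
      choose h hh hMh using fun i => ih (d + 2) (by omega) (hδh i) (hδ i)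
      refine ⟨∑ i, (X i : MvPolynomial σ K) • h i, fun m hm => ?_, ?_⟩
      · obtain ⟨i, -, hi⟩ := Finset.exists_ne_zero_of_sum_ne_zero (by simpa using hm)
        exact hh i m (right_ne_zero_of_mul hi)
      · funext l
        simp [Matrix.mulVec_sum, Matrix.mulVec_smul, hMh, ← hδs l, koszul₁_apply]

end MinGradedFreeRes

/-- If `I ⊆ S = K[x₁,…,xₙ]` is a graded ideal generated by quadrics and
the graded Betti number `β_{2,j}(S/I)` is nonzero for some `j > 4`, then `S/I` is not
Koszul. -/
theorem stmt_0 {K : Type*} [Field K] {n : ℕ} (I : Ideal (MvPolynomial (Fin n) K))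
    (hquad : ∃ Q : Set (MvPolynomial (Fin n) K),
      I = Ideal.span Q ∧ ∀ q ∈ Q, q.IsHomogeneous 2)
    (j : ℕ) (hj : 4 < j)
    (hbetti : ∃ (F : MinGradedFreeRes I) (k : Fin (F.b 2)), F.deg 2 k = j) :
    ¬ IsKoszulQuot I := by
  intro hK
  obtain ⟨Q, rfl, hQ⟩ := hquad
  obtain ⟨F, k, rfl⟩ := hbetti
  obtain ⟨D⟩ := hK.nonempty_linearResolutionLift
  have hcol : ∀ l, (F.M 1 l k).IsHomogeneous (F.deg 2 k - 2) := fun l => by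
    simpa [F.deg_one_eq_two hQ l] using F.homog 1 l k
  obtain ⟨h, hh, hMh⟩ := F.exists_mulVec_eq_with_deg_le_four hQ D _ hcol
    (F.gen_dotProduct_eq_zero_iff.mpr ⟨Pi.single k 1, by funext l; simp⟩)
  have hker : F.M 1 *ᵥ (Pi.single k 1 - h) = 0 := by
    funext l
    simp [Matrix.mulVec_sub, hMh]
  have := F.constantCoeff_eq_zero_of_mulVec_eq_zero hker k
  simp [not_imp_comm.mp (hh k) (by omega)] at this
end

section
/- If H is an induced subgraph of a finite simple graph G, then T/J_H is an algebra retract of S/J_G, where the retraction is given by the composition T/J_H → S/J_G → S/(J_G, L) ≅ T/J_H with L the ideal generated by the variables corresponding to vertices of G not in H. -/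
open MvPolynomial

set_option synthInstance.maxHeartbeats 1000000
set_option maxHeartbeats 1000000

/-- The binomial edge ideal of a simple graph `G` on vertex set `V`, inside
`S = K[x_v, y_v : v ∈ V]`, where `x_v = X (Sum.inl v)` and `y_v = X (Sum.inr v)`:
it is generated by the binomials `x_i y_j - x_j y_i` for edges `{i,j}` of `G`. -/
noncomputable def binomialEdgeIdeal (K : Type*) [Field K] {V : Type*} (G : SimpleGraph V) :
    Ideal (MvPolynomial (V ⊕ V) K) :=
  Ideal.span {f | ∃ i j, G.Adj i j ∧
    f = X (Sum.inl i) * X (Sum.inr j) - X (Sum.inl j) * X (Sum.inr i)}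

/-- A graph `G` is *Koszul* (with respect to `K`) if `S/J_G` is a Koszul algebra. -/
def GraphKoszul (K : Type*) [Field K] {V : Type*} (G : SimpleGraph V) : Prop :=
  IsKoszulQuot (binomialEdgeIdeal K G)

/-!
Relabel the vertices of `H` through an injection `f : ι → V` onto an induced subgraph of `G`.
Renaming the variables along `f` sends each generator of `J_H` to a generator of `J_G`.
Conversely, the map killing the variables of vertices outside the image of `f` sends a
generator of `J_G` either to a generator of `J_H` (both ends in the image, which is where
inducedness is needed) or to `0`, since each monomial of `x_i y_j - x_j y_i` involves both
`i` and `j`. The two maps compose to the identity already on polynomial rings.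
-/

section Retract

variable {K : Type*} [Field K] {ι V : Type*}

theorem binomialEdgeIdeal_le_comap_rename {H : SimpleGraph ι} {G : SimpleGraph V} (f : H →g G) :
    binomialEdgeIdeal K H ≤ (binomialEdgeIdeal K G).comap (rename (Sum.map f f)) := by
  rw [binomialEdgeIdeal, Ideal.span_le]
  rintro _ ⟨i, j, hij, rfl⟩
  refine Ideal.subset_span ⟨f i, f j, f.map_adj hij, ?_⟩
  simp

/-- Substitutes `x_{f a} ↦ x_a`, `y_{f a} ↦ y_a`, and `0` for the variables of vertices
outside the range of `f`. -/
noncomputable def retractVars (f : ι → V) : MvPolynomial (V ⊕ V) K →ₐ[K] MvPolynomial (ι ⊕ ι) K :=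
  aeval (Function.extend (Sum.map f f) X 0)

theorem retractVars_X_sumMap {f : ι → V} (hf : f.Injective) (w : ι ⊕ ι) :
    retractVars (K := K) f (X (Sum.map f f w)) = X w := by
  rw [retractVars, aeval_X, (hf.sumMap hf).extend_apply]

theorem retractVars_X_of_notMem_range {f : ι → V} {u : V ⊕ V}
    (hu : u ∉ Set.range (Sum.map f f)) : retractVars (K := K) f (X u) = 0 := by
  rw [retractVars, aeval_X, Function.extend_apply' _ _ _ hu, Pi.zero_apply]

theorem retractVars_X_inl_eq_zero {f : ι → V} {v : V} (hv : v ∉ Set.range f) :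
    retractVars (K := K) f (X (Sum.inl v)) = 0 :=
  retractVars_X_of_notMem_range fun
    | ⟨.inl a, h⟩ => hv ⟨a, Sum.inl_injective h⟩

theorem retractVars_X_inr_eq_zero {f : ι → V} {v : V} (hv : v ∉ Set.range f) :
    retractVars (K := K) f (X (Sum.inr v)) = 0 :=
  retractVars_X_of_notMem_range fun
    | ⟨.inr a, h⟩ => hv ⟨a, Sum.inr_injective h⟩

theorem binomialEdgeIdeal_le_comap_retractVars {H : SimpleGraph ι} {G : SimpleGraph V}
    (f : H ↪g G) :
    binomialEdgeIdeal K G ≤ (binomialEdgeIdeal K H).comap (retractVars f) := by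
  rw [binomialEdgeIdeal, Ideal.span_le]
  rintro _ ⟨i, j, hij, rfl⟩
  simp only [SetLike.mem_coe, Ideal.mem_comap, map_sub, map_mul]
  by_cases hi : i ∈ Set.range f
  · by_cases hj : j ∈ Set.range f
    · obtain ⟨a, rfl⟩ := hi
      obtain ⟨b, rfl⟩ := hj
      have hl (c : ι) : retractVars (K := K) f (X (Sum.inl (f c))) = X (Sum.inl c) :=
        retractVars_X_sumMap f.injective (.inl c)
      have hr (c : ι) : retractVars (K := K) f (X (Sum.inr (f c))) = X (Sum.inr c) :=
        retractVars_X_sumMap f.injective (.inr c)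
      rw [hl, hl, hr, hr]
      exact Ideal.subset_span ⟨a, b, f.map_adj_iff.mp hij, rfl⟩
    · simp [retractVars_X_inl_eq_zero hj, retractVars_X_inr_eq_zero hj]
  · simp [retractVars_X_inl_eq_zero hi, retractVars_X_inr_eq_zero hi]

end Retract

theorem stmt_4_general {K : Type*} [Field K] {V : Type*} (G : SimpleGraph V)
    (W : Set V) :
    ∃ (φ : (MvPolynomial (↥W ⊕ ↥W) K ⧸ binomialEdgeIdeal K (G.induce W)) →ₐ[K]
          (MvPolynomial (V ⊕ V) K ⧸ binomialEdgeIdeal K G))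
      (ψ : (MvPolynomial (V ⊕ V) K ⧸ binomialEdgeIdeal K G) →ₐ[K]
          (MvPolynomial (↥W ⊕ ↥W) K ⧸ binomialEdgeIdeal K (G.induce W))),
      (∀ w : ↥W ⊕ ↥W,
        φ (Ideal.Quotient.mk (binomialEdgeIdeal K (G.induce W)) (X w)) =
          Ideal.Quotient.mk (binomialEdgeIdeal K G)
            (X (Sum.map Subtype.val Subtype.val w))) ∧
      (∀ w : ↥W ⊕ ↥W,
        ψ (Ideal.Quotient.mk (binomialEdgeIdeal K G)
            (X (Sum.map Subtype.val Subtype.val w))) =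
          Ideal.Quotient.mk (binomialEdgeIdeal K (G.induce W)) (X w)) ∧
      (∀ u : V ⊕ V, u ∉ Set.range (Sum.map (Subtype.val : ↥W → V) (Subtype.val : ↥W → V)) →
        ψ (Ideal.Quotient.mk (binomialEdgeIdeal K G) (X u)) = 0) ∧
      ψ.comp φ = AlgHom.id K _ := by
  let ι : G.induce W ↪g G := SimpleGraph.Embedding.induce W
  have hι : ⇑ι = Subtype.val := rfl
  let φ := Ideal.quotientMapₐ _ _ (binomialEdgeIdeal_le_comap_rename (K := K) ι.toHom)
  let ψ := Ideal.quotientMapₐ _ _ (binomialEdgeIdeal_le_comap_retractVars (K := K) ι)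
  have hφ (w : ↥W ⊕ ↥W) : φ (Ideal.Quotient.mk _ (X w)) =
      Ideal.Quotient.mk _ (X (Sum.map Subtype.val Subtype.val w)) := by
    simp [φ, hι]
  have hψ (w : ↥W ⊕ ↥W) : ψ (Ideal.Quotient.mk _ (X (Sum.map Subtype.val Subtype.val w))) =
      Ideal.Quotient.mk _ (X w) := by
    simp [ψ, hι, retractVars_X_sumMap Subtype.val_injective]
  refine ⟨φ, ψ, hφ, hψ, fun u hu => ?_, ?_⟩
  · simp [ψ, hι, retractVars_X_of_notMem_range hu]
  · refine Ideal.Quotient.algHom_ext _ (MvPolynomial.algHom_ext fun w => ?_)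
    simp [hφ, hψ]

/-- If `H = G[W]` is an induced subgraph of `G`, then `T/J_H` is an
algebra retract of `S/J_G`: there are `K`-algebra maps `φ : T/J_H → S/J_G` (sending the
variables of `T` to the corresponding variables of `S`) and `ψ : S/J_G → T/J_H`
(sending the variables corresponding to vertices of `H` to themselves and all other
variables to `0`, i.e. reduction modulo `L`) whose composition is the identity of
`T/J_H`. -/
theorem stmt_4 {K : Type*} [Field K] {V : Type*} [Fintype V] (G : SimpleGraph V)
    (W : Set V) :
    ∃ (φ : (MvPolynomial (↥W ⊕ ↥W) K ⧸ binomialEdgeIdeal K (G.induce W)) →ₐ[K]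
          (MvPolynomial (V ⊕ V) K ⧸ binomialEdgeIdeal K G))
      (ψ : (MvPolynomial (V ⊕ V) K ⧸ binomialEdgeIdeal K G) →ₐ[K]
          (MvPolynomial (↥W ⊕ ↥W) K ⧸ binomialEdgeIdeal K (G.induce W))),
      (∀ w : ↥W ⊕ ↥W,
        φ (Ideal.Quotient.mk (binomialEdgeIdeal K (G.induce W)) (X w)) =
          Ideal.Quotient.mk (binomialEdgeIdeal K G)
            (X (Sum.map Subtype.val Subtype.val w))) ∧
      (∀ w : ↥W ⊕ ↥W,
        ψ (Ideal.Quotient.mk (binomialEdgeIdeal K G)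
            (X (Sum.map Subtype.val Subtype.val w))) =
          Ideal.Quotient.mk (binomialEdgeIdeal K (G.induce W)) (X w)) ∧
      (∀ u : V ⊕ V, u ∉ Set.range (Sum.map (Subtype.val : ↥W → V) (Subtype.val : ↥W → V)) →
        ψ (Ideal.Quotient.mk (binomialEdgeIdeal K G) (X u)) = 0) ∧
      ψ.comp φ = AlgHom.id K _ :=
  stmt_4_general G W
end

section
/- Let C be the m-cycle (m ≥ 4) with binomial edge ideal J_C generated by f_i = f_{i,i+1} (indices mod m), and let ε: F = ⊕_{i=1}^m T e_i → J_C be the presentation sending e_i to f_i. Then the element g = Σ_{i=1}^m ((x_1···x_m)/(x_i x_{i+1})) e_i lies in the kernel of ε and is a minimal generator of ker ε. -/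
/-!
For a syzygy `k` of `(fᵢ)` put `hᵢ = kᵢ(x, 0)`. Differentiating `∑ kᵢ fᵢ = 0` in `y_{n+1}` and
then setting `y = 0` gives `hₙ xₙ = h_{n+1} x_{n+2}`. Since the `xⱼ` are pairwise non-associate
primes, going once around the cycle shows that every `xⱼ` with `j ≠ n, n+1` divides `hₙ`, that is,
`gₙ ∣ hₙ`. Hence for `x ∈ 𝔪 · ker ε` the polynomial `xₙ(x, 0)` lies in `gₙ 𝔪`, which does not
contain the nonzero polynomial `gₙ = gₙ(x, 0)`.
-/

open MvPolynomial

set_option synthInstance.maxHeartbeats 1000000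
set_option maxHeartbeats 1000000

/-- The edge binomial `f_{i,i+1} = x_i y_{i+1} - x_{i+1} y_i` of the `m`-cycle
(indices mod `m`), in `T = K[x_i, y_i : i ∈ ZMod m]`. -/
noncomputable def cycleBinomial (K : Type*) [Field K] (m : ℕ) (i : ZMod m) :
    MvPolynomial (ZMod m ⊕ ZMod m) K :=
  X (Sum.inl i) * X (Sum.inr (i + 1)) - X (Sum.inl (i + 1)) * X (Sum.inr i)

section
variable {R : Type*} [CommSemiring R] {ι : Type*}

noncomputable def evalInrZero : MvPolynomial (ι ⊕ ι) R →ₐ[R] MvPolynomial (ι ⊕ ι) R :=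
  aeval (Sum.elim (fun i => X (Sum.inl i)) 0)

@[simp]
lemma evalInrZero_X_inl (i : ι) :
    evalInrZero (X (Sum.inl i) : MvPolynomial (ι ⊕ ι) R) = X (Sum.inl i) := by
  simp [evalInrZero]

@[simp]
lemma evalInrZero_X_inr (i : ι) : evalInrZero (X (Sum.inr i) : MvPolynomial (ι ⊕ ι) R) = 0 := by
  simp [evalInrZero]

lemma evalInrZero_mem_span_range_X {r : MvPolynomial (ι ⊕ ι) R}
    (hr : r ∈ Ideal.span (Set.range X)) : evalInrZero r ∈ Ideal.span (Set.range X) := by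
  refine (Ideal.map_le_iff_le_comap.2 ?_) (Ideal.mem_map_of_mem evalInrZero hr)
  rw [Ideal.span_le]
  rintro _ ⟨s | s, rfl⟩
  · simpa using Ideal.subset_span (Set.mem_range_self _)
  · simp

lemma one_notMem_span_range_X {σ : Type*} [Nontrivial R] :
    (1 : MvPolynomial σ R) ∉ Ideal.span (Set.range X) := by
  rw [← Set.image_univ, mem_ideal_span_X_image]
  simp

end

lemma X_dvd_of_dvd_mul_X {R σ : Type*} [CommRing R] [IsDomain R] {a b : σ}
    {p : MvPolynomial σ R} (h : X a ∣ p * X b) (hab : a ≠ b) : X a ∣ p :=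
  (X_prime.dvd_or_dvd h).resolve_right (by simpa using hab)

lemma ZMod.natCast_ne_zero_of_lt {m e : ℕ} (he₀ : e ≠ 0) (hem : e < m) : (e : ZMod m) ≠ 0 := by
  rw [Ne, ZMod.natCast_eq_zero_iff]
  exact fun hdvd => absurd (Nat.le_of_dvd (Nat.pos_of_ne_zero he₀) hdvd) (by omega)

/-- The component `gᵢ = (x₁ ⋯ x_m) / (xᵢ x_{i+1})` of the syzygy `g`. -/
noncomputable def cycleMonomial (K : Type*) [Field K] (m : ℕ) [NeZero m] (i : ZMod m) :
    MvPolynomial (ZMod m ⊕ ZMod m) K :=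
  ∏ j ∈ Finset.univ.filter (fun j : ZMod m => j ≠ i ∧ j ≠ i + 1), X (Sum.inl j)

section
variable {K : Type*} [Field K] {m : ℕ}

@[simp]
lemma evalInrZero_cycleBinomial (i : ZMod m) : evalInrZero (cycleBinomial K m i) = 0 := by
  simp [cycleBinomial]

@[simp]
lemma evalInrZero_cycleMonomial [NeZero m] (i : ZMod m) :
    evalInrZero (cycleMonomial K m i) = cycleMonomial K m i := by
  simp [cycleMonomial, map_prod]

lemma evalInrZero_mul_X_inl_eq [NeZero m] {k : ZMod m → MvPolynomial (ZMod m ⊕ ZMod m) K}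
    (hk : ∑ i, k i * cycleBinomial K m i = 0) (n : ZMod m) :
    evalInrZero (k n) * X (Sum.inl n) = evalInrZero (k (n + 1)) * X (Sum.inl (n + 2)) := by
  have h := congrArg (fun p => evalInrZero (pderiv (Sum.inr (n + 1)) p)) hk
  simp only [map_sum, Derivation.leibniz, map_add, map_mul, smul_eq_mul,
    evalInrZero_cycleBinomial, zero_mul, add_zero] at h
  simpa [cycleBinomial, pderiv_X, Pi.single_apply, apply_ite evalInrZero, mul_sub,
    Finset.sum_sub_distrib, sub_eq_zero, add_assoc, one_add_one_eq_two] using h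

lemma X_inl_add_dvd_evalInrZero [NeZero m] {k : ZMod m → MvPolynomial (ZMod m ⊕ ZMod m) K}
    (hk : ∑ i, k i * cycleBinomial K m i = 0) {e : ℕ} (he : 2 ≤ e) (hem : e < m) (n : ZMod m) :
    X (Sum.inl (n + e)) ∣ evalInrZero (k n) := by
  induction e, he using Nat.le_induction generalizing n with
  | base =>
    refine X_dvd_of_dvd_mul_X (b := Sum.inl n) ?_ ?_
    · rw [evalInrZero_mul_X_inl_eq hk]
      exact_mod_cast dvd_mul_left _ _
    · simpa using ZMod.natCast_ne_zero_of_lt (m := m) two_ne_zero hem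
  | succ e he ih =>
    refine X_dvd_of_dvd_mul_X (b := Sum.inl n) ?_ ?_
    · rw [evalInrZero_mul_X_inl_eq hk]
      have := ih (by omega) (n + 1)
      push_cast at this ⊢
      rw [add_comm (e : ZMod m), ← add_assoc]
      exact dvd_mul_of_dvd_left this _
    · simpa using ZMod.natCast_ne_zero_of_lt (m := m) (e := e + 1) (by omega) hem

lemma cycleMonomial_dvd_evalInrZero [NeZero m] {k : ZMod m → MvPolynomial (ZMod m ⊕ ZMod m) K}
    (hk : ∑ i, k i * cycleBinomial K m i = 0) (n : ZMod m) :
    cycleMonomial K m n ∣ evalInrZero (k n) := by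
  refine Finset.prod_dvd_of_isRelPrime ?_ fun j hj => ?_
  · intro a _ b _ hab
    exact (X_prime.irreducible.isRelPrime_iff_not_dvd).2 (by simpa using hab)
  · simp only [Finset.mem_filter, Finset.mem_univ, true_and] at hj
    have hval : n + ((j - n).val : ZMod m) = j := by simp
    have h0 : (j - n).val ≠ 0 := by
      intro h; apply hj.1; simpa [h] using hval.symm
    have h1 : (j - n).val ≠ 1 := by
      intro h; apply hj.2; simpa [h] using hval.symm
    rw [← hval]
    exact X_inl_add_dvd_evalInrZero hk (by omega) (ZMod.val_lt _) n

lemma evalInrZero_mem_of_mem_smul_ker [NeZero m]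
    {x : ZMod m → MvPolynomial (ZMod m ⊕ ZMod m) K}
    (hx : x ∈ (Ideal.span (Set.range X) : Ideal (MvPolynomial (ZMod m ⊕ ZMod m) K)) •
      LinearMap.ker (Fintype.linearCombination _ (cycleBinomial K m))) (n : ZMod m) :
    evalInrZero (x n) ∈ Ideal.span {cycleMonomial K m n} * Ideal.span (Set.range X) := by
  refine Submodule.smul_induction_on hx (fun r hr k hk => ?_) fun x y hx hy => ?_
  · rw [LinearMap.mem_ker, Fintype.linearCombination_apply] at hk
    obtain ⟨c, hc⟩ := cycleMonomial_dvd_evalInrZero hk n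
    refine Ideal.mem_span_singleton_mul.2 ⟨c * evalInrZero r, ?_, ?_⟩
    · exact Ideal.mul_mem_left _ _ (evalInrZero_mem_span_range_X hr)
    · rw [Pi.smul_apply, smul_eq_mul, map_mul, hc]
      ring
  · rw [Pi.add_apply, map_add]
    exact add_mem hx hy

variable [NeZero m] [Fact (1 < m)]

lemma cycleMonomial_mul_X_inl_self (i : ZMod m) :
    cycleMonomial K m i * X (Sum.inl i) = ∏ j ∈ Finset.univ.erase (i + 1), X (Sum.inl j) := by
  have hfilter : Finset.univ.filter (fun j : ZMod m => j ≠ i ∧ j ≠ i + 1)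
      = (Finset.univ.erase (i + 1)).erase i := by
    ext j; simp
  rw [cycleMonomial, hfilter, Finset.prod_erase_mul]
  simp

lemma cycleMonomial_mul_X_inl_add_one (i : ZMod m) :
    cycleMonomial K m i * X (Sum.inl (i + 1)) = ∏ j ∈ Finset.univ.erase i, X (Sum.inl j) := by
  have hfilter : Finset.univ.filter (fun j : ZMod m => j ≠ i ∧ j ≠ i + 1)
      = (Finset.univ.erase i).erase (i + 1) := by
    ext j; simp [and_comm]
  rw [cycleMonomial, hfilter, Finset.prod_erase_mul]
  simp

/-- Each `gᵢ fᵢ` is a difference of consecutive terms `(∏_{j ≠ i} xⱼ) yᵢ`, so the sum telescopes. -/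
lemma sum_cycleMonomial_mul_cycleBinomial :
    ∑ i, cycleMonomial K m i * cycleBinomial K m i = 0 := by
  have htel (i : ZMod m) : cycleMonomial K m i * cycleBinomial K m i
      = (∏ j ∈ Finset.univ.erase (i + 1), X (Sum.inl j)) * X (Sum.inr (i + 1))
        - (∏ j ∈ Finset.univ.erase i, X (Sum.inl j)) * X (Sum.inr i) := by
    rw [cycleBinomial, mul_sub, ← mul_assoc, ← mul_assoc, cycleMonomial_mul_X_inl_self,
      cycleMonomial_mul_X_inl_add_one]
  rw [Finset.sum_congr rfl fun i _ => htel i, Finset.sum_sub_distrib, sub_eq_zero]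
  exact Fintype.sum_equiv (Equiv.addRight 1) _ _ fun _ => rfl

end

/-- Let `ε : F = ⊕_{i} T e_i → J_C`, `e_i ↦ f_{i,i+1}`, be the free
presentation of the binomial edge ideal of the `m`-cycle (`m ≥ 4`).  Then
`g = Σ_i ((x_1 ⋯ x_m)/(x_i x_{i+1})) e_i` lies in `ker ε` and is a minimal generator of
`ker ε`, i.e. `g ∉ m·ker ε` where `m = (x_i, y_i : i)` is the graded maximal ideal. -/
theorem stmt_7 {K : Type*} [Field K] (m : ℕ) (hm : 4 ≤ m) [NeZero m] :
    letI T := MvPolynomial (ZMod m ⊕ ZMod m) K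
    letI ε : (ZMod m → T) →ₗ[T] T :=
      Fintype.linearCombination T (cycleBinomial K m)
    letI g : ZMod m → T := fun i =>
      ∏ j ∈ Finset.univ.filter (fun j : ZMod m => j ≠ i ∧ j ≠ i + 1), X (Sum.inl j)
    g ∈ LinearMap.ker ε ∧
      g ∉ (Ideal.span (Set.range (X : ZMod m ⊕ ZMod m → T)) • LinearMap.ker ε :
        Submodule T (ZMod m → T)) := by
  have : Fact (1 < m) := ⟨by omega⟩
  refine ⟨?_, fun hg => ?_⟩
  · rw [LinearMap.mem_ker, Fintype.linearCombination_apply]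
    exact sum_cycleMonomial_mul_cycleBinomial
  · obtain ⟨a, ha, hGa⟩ :=
      Ideal.mem_span_singleton_mul.1 (evalInrZero_mem_of_mem_smul_ker hg 0)
    have hG0 : cycleMonomial K m 0 ≠ 0 := Finset.prod_ne_zero_iff.2 fun j _ => X_ne_zero _
    change _ = evalInrZero (cycleMonomial K m 0) at hGa
    rw [evalInrZero_cycleMonomial, mul_eq_left₀ hG0] at hGa
    exact one_notMem_span_range_X (hGa ▸ ha)
end

section
/- Let G be a chordal, claw-free graph whose clique complex Δ(G) admits a leaf order F_1,...,F_r such that for each i > 1 the facet F_i intersects each of its branches in exactly one vertex. If F_{r−1} is a branch of F_r with F_r ∩ F_{r−1} = {v}, then v is a free vertex of the graph G' with clique complex ⟨F_1,...,F_{r−1}⟩. -/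
/-- `F` is a maximal clique of `G` (as a finite set of vertices). -/
def IsMaximalCliqueF {V : Type*} (G : SimpleGraph V) (F : Finset V) : Prop :=
  G.IsClique ↑F ∧ ∀ F' : Finset V, G.IsClique ↑F' → F ⊆ F' → F' = F

/-- `F j` is a branch of `F i` in the order `F`. -/
def IsBranch {V : Type*} [DecidableEq V] {r : ℕ} (F : Fin r → Finset V)
    (i j : Fin r) : Prop :=
  j < i ∧ ∀ l, l < i → F l ∩ F i ⊆ F j ∩ F i

/-- `F₁, …, F_r` is a leaf order of the facets of the clique complex `Δ(G)`. -/
def IsLeafOrder {V : Type*} [DecidableEq V] (G : SimpleGraph V) {r : ℕ}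
    (F : Fin r → Finset V) : Prop :=
  Function.Injective F ∧ (∀ i, IsMaximalCliqueF G (F i)) ∧
    (∀ C : Finset V, IsMaximalCliqueF G C → ∃ i, F i = C) ∧
    ∀ i : Fin r, 0 < (i : ℕ) → ∃ j, IsBranch F i j

/-- `G` is chordal: every cycle of length at least 4 has a chord. -/
def IsChordal {V : Type*} (G : SimpleGraph V) : Prop :=
  ∀ ⦃v : V⦄ (p : G.Walk v v), p.IsCycle → 4 ≤ p.length →
    ∃ a b, a ∈ p.support ∧ b ∈ p.support ∧ G.Adj a b ∧ s(a, b) ∉ p.edges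

/-- `G` is claw free. -/
def ClawFree {V : Type*} (G : SimpleGraph V) : Prop :=
  ¬ ∃ a b c d : V, b ≠ c ∧ b ≠ d ∧ c ≠ d ∧
    G.Adj a b ∧ G.Adj a c ∧ G.Adj a d ∧ ¬ G.Adj b c ∧ ¬ G.Adj b d ∧ ¬ G.Adj c d

/-- `s` is a maximal clique of `G`. -/
def IsMaximalClique {V : Type*} (G : SimpleGraph V) (s : Set V) : Prop :=
  G.IsClique s ∧ ∀ t : Set V, G.IsClique t → s ⊆ t → t = s

/-- `v` is a *free vertex* of `G`: it belongs to exactly one maximal clique of `G`. -/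
def IsFreeVertex {V : Type*} (G : SimpleGraph V) (v : V) : Prop :=
  ∃! s : Set V, IsMaximalClique G s ∧ v ∈ s

/-- The graph with clique complex `⟨F₁, …, F_{r-1}⟩`, i.e. the 1-skeleton of the complex
generated by all the facets except the last one. -/
def skeletonGraph {V : Type*} {r : ℕ} (F : Fin r → Finset V) : SimpleGraph V :=
  SimpleGraph.fromRel fun a b => ∃ j : Fin r, (j : ℕ) < r - 1 ∧ a ∈ F j ∧ b ∈ F j

/-!
Let `L = F_r` be the last facet and `B = F_{r-1}` its branch, so every earlier facet meets `L`
in at most `v`. Every edge of `G` lies in a facet, hence no vertex of `L - v` is adjacent to a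
vertex `≠ v` of an earlier facet. If `v` lay in an earlier facet `A ≠ B`, pick `b ∈ B - A`, a vertex
`a ∈ A` not adjacent to `b` (maximality of `A`) and `c ∈ L - B`: then `v; a, b, c` is a claw.
So `B` is the only earlier facet through `v`, and it follows that `B` is the only maximal clique
of `G'` through `v`.
-/

section

open Finset

variable {V : Type*}

section Cliques

variable {G : SimpleGraph V}

lemma IsMaximalCliqueF.exists_not_adj [DecidableEq V] {A : Finset V}
    (hA : IsMaximalCliqueF G A) {b : V} (hb : b ∉ A) : ∃ a ∈ A, ¬ G.Adj a b := by
  by_contra! hadj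
  have hclique : G.IsClique ↑(insert b A) := by
    rw [coe_insert, SimpleGraph.isClique_insert]
    exact ⟨hA.1, fun a ha _ => (hadj a ha).symm⟩
  exact hb (hA.2 _ hclique (subset_insert b A) ▸ mem_insert_self b A)

lemma exists_isMaximalCliqueF_superset [Finite V] {C : Finset V} (hC : G.IsClique ↑C) :
    ∃ M, IsMaximalCliqueF G M ∧ C ⊆ M := by
  obtain ⟨M, ⟨hMclique, hCM⟩, hmax⟩ := Set.Finite.exists_maximalFor card
    {D : Finset V | G.IsClique ↑D ∧ C ⊆ D} (Set.toFinite _) ⟨C, hC, Subset.refl C⟩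
  refine ⟨M, ⟨hMclique, fun D hD hMD => ?_⟩, hCM⟩
  exact (eq_of_subset_of_card_le hMD (hmax ⟨hD, hCM.trans hMD⟩ (card_le_card hMD))).symm

lemma IsMaximalCliqueF.isMaximalClique [Finite V] {A : Finset V} (hA : IsMaximalCliqueF G A) :
    IsMaximalClique G ↑A := by
  refine ⟨hA.1, fun t ht hAt => ?_⟩
  have ht' : G.IsClique ↑(Set.toFinite t).toFinset := by rwa [Set.Finite.coe_toFinset]
  have hAt' : A ⊆ (Set.toFinite t).toFinset := fun x hx => by simpa using hAt hx
  rw [← hA.2 _ ht' hAt', Set.Finite.coe_toFinset]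

lemma IsMaximalClique.of_le {H : SimpleGraph V} (hle : H ≤ G) {s : Set V}
    (hs : IsMaximalClique G s) (hsH : H.IsClique s) : IsMaximalClique H s :=
  ⟨hsH, fun t ht hst => hs.2 t (ht.mono hle) hst⟩

end Cliques

section LeafOrder

variable [DecidableEq V] {G : SimpleGraph V} {r : ℕ} {F : Fin r → Finset V}

lemma IsLeafOrder.isMaximalCliqueF (hF : IsLeafOrder G F) (i : Fin r) :
    IsMaximalCliqueF G (F i) :=
  hF.2.1 i

lemma IsLeafOrder.eq_of_subset (hF : IsLeafOrder G F) {i j : Fin r} (hij : F i ⊆ F j) :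
    i = j :=
  hF.1 ((hF.isMaximalCliqueF i).2 _ (hF.isMaximalCliqueF j).1 hij).symm

lemma IsLeafOrder.exists_superset [Finite V] (hF : IsLeafOrder G F) {s : Set V}
    (hs : G.IsClique s) : ∃ i, s ⊆ F i := by
  obtain ⟨M, hM, hsM⟩ := exists_isMaximalCliqueF_superset (C := (Set.toFinite s).toFinset)
    (by rwa [Set.Finite.coe_toFinset])
  obtain ⟨i, rfl⟩ := hF.2.2.1 M hM
  exact ⟨i, fun x hx => hsM (by simpa using hx)⟩

variable {ℓ : Fin r} {v : V}

lemma eq_of_mem_of_mem_of_inter_subset_singleton (hℓ : ∀ j ≠ ℓ, F j ∩ F ℓ ⊆ {v}) {j : Fin r}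
    (hj : j ≠ ℓ) {x : V} (hxj : x ∈ F j) (hxℓ : x ∈ F ℓ) : x = v :=
  mem_singleton.1 (hℓ j hj (mem_inter.2 ⟨hxj, hxℓ⟩))

lemma IsLeafOrder.not_adj_of_inter_subset_singleton [Finite V] (hF : IsLeafOrder G F)
    (hℓ : ∀ j ≠ ℓ, F j ∩ F ℓ ⊆ {v}) {j : Fin r} (hj : j ≠ ℓ) {x c : V} (hx : x ∈ F j)
    (hxv : x ≠ v) (hc : c ∈ F ℓ) (hcv : c ≠ v) : ¬ G.Adj x c := by
  intro hxc
  obtain ⟨i, hi⟩ := hF.exists_superset (SimpleGraph.isClique_pair.2 fun _ => hxc)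
  by_cases hiℓ : i = ℓ
  · subst hiℓ
    exact hxv (eq_of_mem_of_mem_of_inter_subset_singleton hℓ hj hx (hi (by simp)))
  · exact hcv (eq_of_mem_of_mem_of_inter_subset_singleton hℓ hiℓ (hi (by simp)) hc)

lemma ClawFree.eq_of_mem_of_inter_subset_singleton [Finite V] (hcf : ClawFree G)
    (hF : IsLeafOrder G F)
    (hℓ : ∀ j ≠ ℓ, F j ∩ F ℓ ⊆ {v}) (hvℓ : v ∈ F ℓ) {q k : Fin r} (hq : q ≠ ℓ) (hvq : v ∈ F q)
    (hk : k ≠ ℓ) (hvk : v ∈ F k) : k = q := by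
  by_contra hkq
  obtain ⟨b, hbq, hbk⟩ := not_subset.1 fun h => hkq (hF.eq_of_subset h).symm
  obtain ⟨a, hak, hab⟩ := (hF.isMaximalCliqueF k).exists_not_adj hbk
  obtain ⟨c, hcℓ, hcq⟩ := not_subset.1 fun h => hq (hF.eq_of_subset h).symm
  have hbv : b ≠ v := fun h => hbk (h ▸ hvk)
  have hcv : c ≠ v := fun h => hcq (h ▸ hvq)
  have hvb : G.Adj v b := (hF.isMaximalCliqueF q).1 hvq hbq hbv.symm
  have hav : a ≠ v := fun h => hab (h ▸ hvb)
  have hac : a ≠ c := fun h => hav (eq_of_mem_of_mem_of_inter_subset_singleton hℓ hk hak (h ▸ hcℓ))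
  exact hcf ⟨v, a, b, c, fun h => hbk (h ▸ hak), hac, fun h => hcq (h ▸ hbq),
    (hF.isMaximalCliqueF k).1 hvk hak hav.symm, hvb, (hF.isMaximalCliqueF ℓ).1 hvℓ hcℓ hcv.symm,
    hab, hF.not_adj_of_inter_subset_singleton hℓ hk hak hav hcℓ hcv,
    hF.not_adj_of_inter_subset_singleton hℓ hq hbq hbv hcℓ hcv⟩

end LeafOrder

section Skeleton

variable {r : ℕ} {F : Fin r → Finset V}

lemma skeletonGraph_le {G : SimpleGraph V} (hF : ∀ j, G.IsClique (F j : Set V)) :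
    skeletonGraph F ≤ G := by
  intro x y hxy
  rw [skeletonGraph, SimpleGraph.fromRel_adj] at hxy
  obtain ⟨hne, ⟨j, -, hx, hy⟩ | ⟨j, -, hy, hx⟩⟩ := hxy
  · exact hF j hx hy hne
  · exact hF j hx hy hne

lemma isClique_skeletonGraph {j : Fin r} (hj : (j : ℕ) < r - 1) :
    (skeletonGraph F).IsClique (F j : Set V) :=
  fun _ hx _ hy hxy => (SimpleGraph.fromRel_adj _ _ _).2 ⟨hxy, Or.inl ⟨j, hj, hx, hy⟩⟩

lemma exists_mem_of_skeletonGraph_adj {x y : V} (h : (skeletonGraph F).Adj x y) :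
    ∃ j : Fin r, (j : ℕ) < r - 1 ∧ x ∈ F j := by
  rw [skeletonGraph, SimpleGraph.fromRel_adj] at h
  obtain ⟨-, ⟨j, hj, hx, -⟩ | ⟨j, hj, -, hx⟩⟩ := h <;> exact ⟨j, hj, hx⟩

end Skeleton

theorem isFreeVertex_skeletonGraph [Finite V] [DecidableEq V] {G : SimpleGraph V} {r : ℕ}
    {F : Fin r → Finset V} {ℓ : Fin r} {v : V} (hcf : ClawFree G) (hF : IsLeafOrder G F)
    (hℓr : (ℓ : ℕ) = r - 1) (hℓ : ∀ j ≠ ℓ, F j ∩ F ℓ ⊆ {v}) (hvℓ : v ∈ F ℓ) {q : Fin r}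
    (hq : q ≠ ℓ) (hvq : v ∈ F q) : IsFreeVertex (skeletonGraph F) v := by
  have hlt : ∀ j : Fin r, (j : ℕ) < r - 1 ↔ j ≠ ℓ := fun j => by
    rw [Ne, Fin.ext_iff]
    omega
  have hle : skeletonGraph F ≤ G := skeletonGraph_le fun j => (hF.isMaximalCliqueF j).1
  have hqmax : IsMaximalClique (skeletonGraph F) (F q) :=
    (hF.isMaximalCliqueF q).isMaximalClique.of_le hle (isClique_skeletonGraph ((hlt q).2 hq))
  refine ⟨F q, ⟨hqmax, hvq⟩, ?_⟩
  rintro s ⟨hs, hvs⟩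
  -- A clique of `G'` through `v` inside the last facet is `{v}`: its other vertices would be
  -- `G'`-adjacent to `v`, hence lie in an earlier facet.
  obtain ⟨j, hj, hsj⟩ : ∃ j ≠ ℓ, s ⊆ F j := by
    obtain ⟨i, hsi⟩ := hF.exists_superset (hs.1.mono hle)
    by_cases hiℓ : i = ℓ
    · refine ⟨q, hq, fun x hx => ?_⟩
      by_contra hxq
      have hxv : x ≠ v := fun h => hxq (h ▸ hvq)
      obtain ⟨j, hj, hxj⟩ := exists_mem_of_skeletonGraph_adj (hs.1 hx hvs hxv)
      exact hxv (eq_of_mem_of_mem_of_inter_subset_singleton hℓ ((hlt j).1 hj) hxj (hiℓ ▸ hsi hx))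
    · exact ⟨i, hiℓ, hsi⟩
  have hsF : s = F j := (hs.2 _ (isClique_skeletonGraph ((hlt j).2 hj)) hsj).symm
  rw [hsF, hcf.eq_of_mem_of_inter_subset_singleton hF hℓ hvℓ hq hvq hj (mem_coe.1 (hsF ▸ hvs))]

end

/-- Let `G` be a chordal, claw-free graph whose clique complex admits
a leaf order `F₁, …, F_r` (`r ≥ 2`) in which each facet meets each of its branches in
exactly one vertex.  If `F_{r-1}` is a branch of `F_r` and `F_r ∩ F_{r-1} = {v}`, then
`v` is a free vertex of the graph `G'` with clique complex `⟨F₁, …, F_{r-1}⟩`. -/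
theorem stmt_13 {V : Type*} [Fintype V] [DecidableEq V]
    (G : SimpleGraph V) (hcf : ClawFree G)
    {r : ℕ} (hr : 2 ≤ r) (F : Fin r → Finset V) (hF : IsLeafOrder G F)
    (v : V)
    (hbr : IsBranch F ⟨r - 1, by omega⟩ ⟨r - 2, by omega⟩)
    (hv : F ⟨r - 1, by omega⟩ ∩ F ⟨r - 2, by omega⟩ = {v}) :
    IsFreeVertex (skeletonGraph F) v := by
  have hv' : v ∈ F ⟨r - 1, by omega⟩ ∩ F ⟨r - 2, by omega⟩ := hv ▸ Finset.mem_singleton_self v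
  refine isFreeVertex_skeletonGraph hcf hF rfl (fun j hj => ?_) (Finset.mem_of_mem_inter_left hv')
    (ne_of_lt hbr.1) (Finset.mem_of_mem_inter_right hv')
  rw [← hv, Finset.inter_comm (F ⟨r - 1, _⟩)]
  refine hbr.2 j (lt_of_le_of_ne ?_ hj)
  exact Fin.le_iff_val_le_val.2 (Nat.le_sub_one_of_lt j.isLt)
end

section
/- Let D be a subcomplex consisting of 2-dimensional facets of the clique complex of a chordal, claw-free graph G with Koszul binomial edge ideal, such that D is connected in codimension 1 and Δ(G) contains no induced copy of the 'two triangles sharing vertices' configuration of the non-Koszul example. Then the 1-skeleton of D is a 2-dimensional line graph, i.e., its facets can be labeled {1,2,3},{2,3,4},...,{m−1,m,m+1},{m,m+1,m+2}. -/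
open MvPolynomial

set_option synthInstance.maxHeartbeats 1000000
set_option maxHeartbeats 1000000

/-- A family `D` of facets is connected in codimension 1: any two facets of `D` are
joined by a sequence of facets of `D` in which consecutive members meet in a set of
cardinality 2. -/
def Codim1Conn {V : Type*} [DecidableEq V] (D : Set (Finset V)) : Prop :=
  ∀ F ∈ D, ∀ F' ∈ D, ∃ (t : ℕ) (c : Fin (t + 1) → Finset V),
    c 0 = F ∧ c (Fin.last t) = F' ∧ (∀ k, c k ∈ D) ∧
    ∀ k : Fin t, (c k.castSucc ∩ c k.succ).card = 2

/-- The 6-vertex configuration of three triangles from the non-Koszul example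
(Figure 3): triangles `{1,2,4}`, `{2,3,5}`, `{4,5,6}` pairwise sharing a vertex. -/
def threeTriangles : SimpleGraph (Fin 6) :=
  SimpleGraph.fromRel fun a b =>
    (a, b) ∈ ([(0, 1), (0, 3), (1, 3), (1, 2), (1, 4), (2, 4), (3, 4), (3, 5), (4, 5)] :
      List (Fin 6 × Fin 6))

/-- `G` contains no induced subgraph isomorphic to `H`. -/
def NoInducedCopy {V W : Type*} (G : SimpleGraph V) (H : SimpleGraph W) : Prop :=
  ¬ ∃ w : W ↪ V, ∀ a b, G.Adj (w a) (w b) ↔ H.Adj a b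

/-!
Call a sequence `q 0, …, q (n - 1)` of distinct vertices inducing the square of a path a
ladder; its triangles `{q k, q (k + 1), q (k + 2)}` form a 2-dimensional line graph. Take a
ladder of maximal length all of whose triangles lie in `D`.

Chordality controls how a vertex `s` off the ladder meets it: if `s` saw two ladder vertices
more than two steps apart, an induced path of the ladder between them would close a chordless
cycle through `s`. Now let `F = {x, y, s} ∈ D` share the edge `{x, y}` with a ladder triangle
without being one. If `{x, y}` is an inner rung `{q j, q (j + 1)}`, then `q (j - 1)`, `q (j + 2)`
and `s` form a claw at `q j`. If it is the first or last rung, `s` extends the ladder. If it is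
`{q k, q (k + 2)}`, then `s` gives a claw at `q k` when `k ≥ 2`, the forbidden configuration
`threeTriangles` together with `q 0, …, q 4` when `k = 1`, and otherwise, after swapping two
labels, the ladder extends again. So, by connectedness in codimension 1, the ladder triangles
are all of `D`, and the positions on the ladder are the required labels.
-/

section

variable {V : Type*} {G : SimpleGraph V}

/-- `q 0, …, q (n - 1)` are distinct and induce the `d`-th power of the path through them in
this order: `d = 1` is an induced path, `d = 2` a ladder. -/
def IsInducedPathPow (G : SimpleGraph V) (d n : ℕ) (q : ℕ → V) : Prop :=
  Set.InjOn q (Set.Iio n) ∧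
    ∀ i < n, ∀ j < n, (G.Adj (q i) (q j) ↔ i ≠ j ∧ i ≤ j + d ∧ j ≤ i + d)

namespace IsInducedPathPow

variable {d n : ℕ} {q : ℕ → V} {i j : ℕ}

theorem ne (hq : IsInducedPathPow G d n q) (hi : i < n) (hj : j < n) (hij : i ≠ j) :
    q i ≠ q j :=
  fun h => hij (hq.1 hi hj h)

theorem adj (hq : IsInducedPathPow G d n q) (hi : i < n) (hj : j < n)
    (h : i ≠ j ∧ i ≤ j + d ∧ j ≤ i + d) : G.Adj (q i) (q j) :=
  (hq.2 i hi j hj).2 h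

theorem not_adj (hq : IsInducedPathPow G d n q) (hi : i < n) (hj : j < n)
    (h : i + d < j ∨ j + d < i) : ¬ G.Adj (q i) (q j) := fun h' => by
  have := (hq.2 i hi j hj).1 h'
  omega

theorem congr {q' : ℕ → V} (hq : IsInducedPathPow G d n q) (h : ∀ i < n, q i = q' i) :
    IsInducedPathPow G d n q' := by
  refine ⟨fun i hi j hj hij => hq.1 hi hj ?_, fun i hi j hj => ?_⟩
  · rwa [h i hi, h j hj]
  · rw [← h i hi, ← h j hj]
    exact hq.2 i hi j hj

theorem mono {m : ℕ} (hq : IsInducedPathPow G d n q) (hm : m ≤ n) :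
    IsInducedPathPow G d m q :=
  ⟨fun i (hi : i < m) j (hj : j < m) h => hq.1 (by simp; omega) (by simp; omega) h,
    fun i hi j hj => hq.2 i (by omega) j (by omega)⟩

theorem reverse (hq : IsInducedPathPow G d n q) :
    IsInducedPathPow G d n fun i => q (n - 1 - i) := by
  refine ⟨fun i (hi : i < n) j (hj : j < n) hij => ?_, fun i hi j hj => ?_⟩
  · have := hq.1 (show n - 1 - i < n by omega) (show n - 1 - j < n by omega) hij
    omega
  · rw [hq.2 _ (by omega) _ (by omega)]
    omega

theorem succ (hq : IsInducedPathPow G d n q) (hne : ∀ i < n, q i ≠ q n)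
    (hadj : ∀ i < n, (G.Adj (q i) (q n) ↔ n ≤ i + d)) : IsInducedPathPow G d (n + 1) q := by
  refine ⟨fun i (hi : i < n + 1) j (hj : j < n + 1) hij => ?_, fun i hi j hj => ?_⟩
  · by_contra h
    rcases Nat.lt_or_ge i n with hi' | hi' <;> rcases Nat.lt_or_ge j n with hj' | hj'
    · exact h (hq.1 hi' hj' hij)
    · exact hne i hi' (by rwa [show n = j by omega])
    · exact hne j hj' (by rw [← hij, show n = i by omega])
    · omega
  · rcases Nat.lt_or_ge i n with hi' | hi' <;> rcases Nat.lt_or_ge j n with hj' | hj'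
    · exact hq.2 i hi' j hj'
    · obtain rfl : j = n := by omega
      rw [hadj i hi']
      omega
    · obtain rfl : i = n := by omega
      rw [G.adj_comm, hadj j hj']
      omega
    · obtain rfl : i = n := by omega
      obtain rfl : j = i := by omega
      simp

theorem swap (hq : IsInducedPathPow G 2 (i + 3) q) (hi : i ≤ 1) :
    IsInducedPathPow G 2 (i + 3) (q ∘ Equiv.swap i (i + 1)) := by
  have hlt : ∀ a < i + 3, Equiv.swap i (i + 1) a < i + 3 := fun a ha => by
    rw [Equiv.swap_apply_def]; split_ifs <;> omega
  refine ⟨fun a ha b hb h => (Equiv.swap i (i + 1)).injective (hq.1 (hlt a ha) (hlt b hb) h),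
    fun a ha b hb => ?_⟩
  rw [Function.comp_apply, Function.comp_apply, hq.2 _ (hlt a ha) _ (hlt b hb),
    Equiv.swap_apply_def, Equiv.swap_apply_def]
  split_ifs <;> omega

theorem isInducedPathPow_one_comp (hq : IsInducedPathPow G 2 n q) {r : ℕ → ℕ} {L : ℕ}
    (hstep : ∀ t < L, r t < r (t + 1) ∧ r (t + 1) ≤ r t + 2)
    (hskip : ∀ t, t + 2 ≤ L → r t + 3 ≤ r (t + 2)) (hrL : r L < n) :
    IsInducedPathPow G 1 (L + 1) (q ∘ r) := by
  have hgap : ∀ t t', t < t' → t' ≤ L →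
      r t < r t' ∧ (r t' ≤ r t + 2 ↔ t' = t + 1) := by
    intro t t' h h'
    induction t' with
    | zero => omega
    | succ t' ih =>
      have := hstep t' (by omega)
      rcases Nat.lt_or_ge t t' with h'' | h''
      · have := ih h'' (by omega)
        rcases Nat.lt_or_ge (t + 1) t' with h3 | h3
        · omega
        · obtain rfl : t' = t + 1 := by omega
          have : r t + 3 ≤ r (t + 1 + 1) := hskip t (by omega)
          omega
      · obtain rfl : t' = t := by omega
        omega
  have hr : ∀ t ≤ L, r t < n := fun t ht => by
    rcases ht.lt_or_eq with h | rfl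
    exacts [(hgap t L h le_rfl).1.trans hrL, hrL]
  refine ⟨fun t (ht : t < L + 1) t' (ht' : t' < L + 1) h => ?_, fun t ht t' ht' => ?_⟩
  · by_contra hne
    rcases Nat.lt_or_gt_of_ne hne with h' | h'
    · exact hq.ne (hr t (by omega)) (hr t' (by omega)) (hgap t t' h' (by omega)).1.ne h
    · exact hq.ne (hr t (by omega)) (hr t' (by omega)) (hgap t' t h' (by omega)).1.ne' h
  · rw [Function.comp_apply, Function.comp_apply, hq.2 _ (hr t (by omega)) _ (hr t' (by omega))]
    rcases lt_trichotomy t t' with h' | rfl | h'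
    · have := hgap t t' h' (by omega); omega
    · omega
    · have := hgap t' t h' (by omega); omega

end IsInducedPathPow

theorem exists_walk_of_adj_succ (p : ℕ → V) (L : ℕ) (h : ∀ i < L, G.Adj (p i) (p (i + 1))) :
    ∃ W : G.Walk (p 0) (p L), W.support = (List.range (L + 1)).map p ∧
      W.edges = (List.range L).map (fun i => s(p i, p (i + 1))) ∧ W.length = L := by
  induction L with
  | zero => exact ⟨.nil, by simp, by simp, rfl⟩
  | succ L ih =>
    obtain ⟨W, hs, he, hl⟩ := ih fun i hi => h i (by omega)
    refine ⟨W.concat (h L (by omega)), ?_, ?_, by simp [hl]⟩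
    · rw [SimpleGraph.Walk.support_concat, hs, List.range_succ (n := L + 1), List.map_append]
      simp
    · rw [SimpleGraph.Walk.edges_concat, he, List.range_succ (n := L), List.map_append]
      simp

theorem exists_isCycle_of_isInducedPathPow {p : ℕ → V} {L : ℕ}
    (hp : IsInducedPathPow G 1 (L + 1) p) (hL : 1 ≤ L) {w : V} (hw : ∀ i ≤ L, p i ≠ w)
    (h0 : G.Adj (p 0) w) (hL' : G.Adj (p L) w) :
    ∃ C : G.Walk w w, C.IsCycle ∧ C.length = L + 2 ∧
      (∀ x ∈ C.support, x = w ∨ ∃ i ≤ L, p i = x) ∧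
      (∀ i < L, s(p i, p (i + 1)) ∈ C.edges) ∧
      s(p 0, w) ∈ C.edges ∧ s(p L, w) ∈ C.edges := by
  obtain ⟨W, hsupp, hedges, hlen⟩ := exists_walk_of_adj_succ p L fun i hi =>
    hp.adj (by omega) (by omega) (by omega)
  have hpath : (W.concat hL').IsPath := by
    refine (SimpleGraph.Walk.concat_isPath_iff _).2 ⟨.mk' ?_, ?_⟩
    · rw [hsupp]
      exact List.Nodup.map_on (fun i hi j hj => hp.1 (by simp at hi; simp; omega)
        (by simp at hj; simp; omega)) List.nodup_range
    · simpa [hsupp] using fun i hi => hw i (by omega)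
  refine ⟨.cons h0.symm (W.concat hL'), (SimpleGraph.Walk.cons_isCycle_iff _ _).2 ⟨hpath, ?_⟩,
    by simp [hlen], fun x hx => ?_, fun i hi => ?_, by simp [Sym2.eq_swap], by simp⟩
  · simp only [SimpleGraph.Walk.edges_concat, hedges, List.concat_eq_append, List.mem_append,
      List.mem_map, List.mem_range, List.mem_singleton, Sym2.eq_iff]
    rintro (⟨i, hi, ⟨h1, -⟩ | ⟨-, h1⟩⟩ | ⟨-, h1⟩ | ⟨-, h1⟩)
    · exact hw i (by omega) h1
    · exact hw (i + 1) (by omega) h1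
    · exact hw 0 (by omega) h1
    · exact hp.ne (i := 0) (j := L) (by omega) (by omega) (by omega) h1
  · simp only [SimpleGraph.Walk.support_cons, SimpleGraph.Walk.support_concat, hsupp,
      List.mem_cons, List.mem_append, List.mem_map, List.mem_range, List.not_mem_nil,
      or_false] at hx
    rcases hx with h | ⟨i, hi, h⟩ | h
    exacts [.inl h, .inr ⟨i, by omega, h⟩, .inl h]
  · simp only [SimpleGraph.Walk.edges_cons, SimpleGraph.Walk.edges_concat, hedges,
      List.concat_eq_append, List.mem_cons, List.mem_append, List.mem_map]
    exact .inr (.inl ⟨i, List.mem_range.2 hi, rfl⟩)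

theorem IsChordal.exists_adj_of_isInducedPathPow (hG : IsChordal G) {p : ℕ → V} {L : ℕ}
    (hp : IsInducedPathPow G 1 (L + 1) p) (hL : 2 ≤ L) {w : V} (hw : ∀ i ≤ L, p i ≠ w)
    (h0 : G.Adj (p 0) w) (hL' : G.Adj (p L) w) : ∃ i, 0 < i ∧ i < L ∧ G.Adj (p i) w := by
  by_contra! hinner
  obtain ⟨C, hC, hlen, hsupp, hpath, hfirst, hlast⟩ :=
    exists_isCycle_of_isInducedPathPow hp (by omega) hw h0 hL'
  have hspoke : ∀ j ≤ L, G.Adj (p j) w → s(p j, w) ∈ C.edges := fun j hj h => by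
    rcases Nat.eq_zero_or_pos j with rfl | hj0
    · exact hfirst
    obtain rfl : j = L := by
      by_contra hjL
      exact hinner j hj0 (by omega) h
    exact hlast
  obtain ⟨a, b, ha, hb, hab, hnot⟩ := hG C hC (by omega)
  rcases hsupp a ha with rfl | ⟨i, hi, rfl⟩ <;> rcases hsupp b hb with rfl | ⟨j, hj, rfl⟩
  · exact G.irrefl hab
  · exact hnot (Sym2.eq_swap ▸ hspoke j hj hab.symm)
  · exact hnot (hspoke i hi hab)
  · have := (hp.2 i (by omega) j (by omega)).1 hab
    rcases Nat.lt_or_gt_of_ne this.1 with h | h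
    · obtain rfl : j = i + 1 := by omega
      exact hnot (hpath i (by omega))
    · obtain rfl : i = j + 1 := by omega
      exact hnot (Sym2.eq_swap ▸ hpath j (by omega))

theorem IsInducedPathPow.not_noInducedCopy_threeTriangles {q : ℕ → V} {s : V}
    (hq : IsInducedPathPow G 2 5 q) (hs : ∀ i < 5, q i ≠ s) (h0 : ¬ G.Adj (q 0) s)
    (h1 : G.Adj (q 1) s) (h2 : ¬ G.Adj (q 2) s) (h3 : G.Adj (q 3) s) (h4 : ¬ G.Adj (q 4) s) :
    ¬ NoInducedCopy G threeTriangles := by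
  have hs' : ∀ i < 5, s ≠ q i := fun i hi h => hs i hi h.symm
  have hne : ∀ i < 5, ∀ j < 5, (q i = q j ↔ i = j) := fun i hi j hj =>
    ⟨fun h => hq.1 hi hj h, fun h => h ▸ rfl⟩
  -- the triangles `{1, 2, 4}`, `{2, 3, 5}`, `{4, 5, 6}` are `{q 0, q 1, q 2}`, `{q 2, q 3, q 4}`
  -- and `{q 1, q 3, s}`
  let v : Fin 6 → V := ![q 0, q 2, q 4, q 1, q 3, s]
  have hinj : Function.Injective v := fun a b h => by
    fin_cases a <;> fin_cases b <;> simp_all [v]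
  refine not_not.2 ⟨⟨v, hinj⟩, fun a b => ?_⟩
  fin_cases a <;> fin_cases b <;>
    simp [v, threeTriangles, hq.2, G.adj_comm s, h0, h1, h2, h3, h4]

section Triangles

variable [DecidableEq V] {n : ℕ} {q : ℕ → V} {s : V}

def pathTriangle (q : ℕ → V) (k : ℕ) : Finset V := {q k, q (k + 1), q (k + 2)}

theorem exists_eq_of_mem_pathTriangle {k : ℕ} {v : V} (h : v ∈ pathTriangle q k) :
    ∃ i ≤ k + 2, q i = v := by
  simp only [pathTriangle, Finset.mem_insert, Finset.mem_singleton] at h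
  rcases h with rfl | rfl | rfl
  exacts [⟨k, by omega, rfl⟩, ⟨k + 1, by omega, rfl⟩, ⟨k + 2, le_rfl, rfl⟩]

theorem pathTriangle_reverse {k : ℕ} (hk : k + 2 < n) :
    pathTriangle (fun i => q (n - 1 - i)) k = pathTriangle q (n - 3 - k) := by
  simp only [pathTriangle]
  rw [show n - 1 - (k + 1) = n - 3 - k + 1 by omega, show n - 1 - (k + 2) = n - 3 - k by omega,
    show n - 1 - k = n - 3 - k + 2 by omega]
  ext; simp only [Finset.mem_insert, Finset.mem_singleton]; tauto

theorem pathTriangle_comp_swap {i k : ℕ} (hi : i ≤ 1) (hk : k ≤ i) :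
    pathTriangle (q ∘ Equiv.swap i (i + 1)) k = pathTriangle q k := by
  interval_cases i <;> interval_cases k <;>
    · simp only [pathTriangle, Function.comp_apply]
      ext; simp [Equiv.swap_apply_def]; tauto

theorem IsMaximalCliqueF.not_adj_of_subset {F : Finset V} (hF : IsMaximalCliqueF G F)
    {v x y z : V} (hsub : F ⊆ {x, y, z}) (hx : G.Adj x v) (hy : G.Adj y v) :
    ¬ G.Adj z v := by
  intro hz
  have hadj : ∀ u ∈ F, G.Adj u v := fun u hu => by
    rcases Finset.mem_insert.1 (hsub hu) with rfl | hu
    · exact hx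
    rcases Finset.mem_insert.1 hu with rfl | hu
    · exact hy
    · rwa [Finset.mem_singleton.1 hu]
  have hv : v ∉ F := fun hv => G.irrefl (hadj v hv)
  have hcl : G.IsClique ↑(insert v F) := by
    rw [Finset.coe_insert]
    exact hF.1.insert fun u hu _ => (hadj u hu).symm
  exact hv (hF.2 _ hcl (Finset.subset_insert _ _) ▸ Finset.mem_insert_self v F)

theorem exists_eq_of_card_inter_eq_two {F : Finset V} {x y z : V} (hF : F.card = 3)
    (h : ({x, y, z} ∩ F).card = 2) :
    ∃ s ∉ ({x, y, z} : Finset V), F = {x, y, s} ∨ F = {x, z, s} ∨ F = {y, z, s} := by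
  obtain ⟨s, hs⟩ := Finset.card_eq_one.1 (show (F \ {x, y, z}).card = 1 by
    rw [Finset.card_sdiff, h, hF])
  obtain ⟨a, b, hab, hE⟩ := Finset.card_eq_two.1 h
  have hFeq : F = {a, b, s} := by
    rw [← Finset.sdiff_union_inter F {x, y, z}, hs, Finset.inter_comm, hE]
    ext; simp only [Finset.mem_union, Finset.mem_insert, Finset.mem_singleton]; tauto
  have ha : a ∈ ({x, y, z} : Finset V) :=
    Finset.mem_of_mem_inter_left (show a ∈ {x, y, z} ∩ F by rw [hE]; simp)
  have hb : b ∈ ({x, y, z} : Finset V) :=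
    Finset.mem_of_mem_inter_left (show b ∈ {x, y, z} ∩ F by rw [hE]; simp)
  refine ⟨s, (Finset.mem_sdiff.1 (hs ▸ Finset.mem_singleton_self s)).2, ?_⟩
  simp only [Finset.mem_insert, Finset.mem_singleton] at ha hb
  subst hFeq
  rcases ha with rfl | rfl | rfl <;> rcases hb with rfl | rfl | rfl <;>
    first
    | exact absurd rfl hab
    | (left; ext; simp only [Finset.mem_insert, Finset.mem_singleton] <;> tauto)
    | (right; left; ext; simp only [Finset.mem_insert, Finset.mem_singleton] <;> tauto)
    | (right; right; ext; simp only [Finset.mem_insert, Finset.mem_singleton] <;> tauto)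

namespace IsInducedPathPow

theorem exists_pathTriangle_eq (hq : IsInducedPathPow G 2 n q) {a b c : ℕ} (ha : a < n)
    (hb : b < n) (hc : c < n) (hcl : G.IsClique ↑({q a, q b, q c} : Finset V))
    (h3 : ({q a, q b, q c} : Finset V).card = 3) :
    ∃ k, k + 2 < n ∧ pathTriangle q k = {q a, q b, q c} := by
  have hne : q a ≠ q b ∧ q a ≠ q c ∧ q b ≠ q c := by
    grind [Finset.card_le_two, Finset.card_le_one]
  have hab := (hq.2 a ha b hb).1 (hcl (by simp) (by simp) hne.1)
  have hac := (hq.2 a ha c hc).1 (hcl (by simp) (by simp) hne.2.1)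
  have hbc := (hq.2 b hb c hc).1 (hcl (by simp) (by simp) hne.2.2)
  obtain ⟨k, hk⟩ : ∃ k, k = min a (min b c) := ⟨_, rfl⟩
  refine ⟨k, by omega, (Finset.eq_of_subset_of_card_le ?_ ?_).symm⟩
  · have hmem : ∀ i, i = k ∨ i = k + 1 ∨ i = k + 2 → q i ∈ pathTriangle q k := by
      rintro i (rfl | rfl | rfl) <;> simp [pathTriangle]
    simp only [Finset.insert_subset_iff, Finset.singleton_subset_iff]
    exact ⟨hmem a (by omega), hmem b (by omega), hmem c (by omega)⟩
  · rw [h3]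
    exact Finset.card_le_three

theorem le_add_two_of_adj (hG : IsChordal G) (hq : IsInducedPathPow G 2 n q)
    (hT : ∀ k, k + 2 < n → IsMaximalCliqueF G (pathTriangle q k)) (hs : ∀ i < n, q i ≠ s)
    {a b : ℕ} (hab : a ≤ b) (hb : b < n) (ha : G.Adj (q a) s) (hb' : G.Adj (q b) s) :
    b ≤ a + 2 := by
  induction hd : b - a using Nat.strong_induction_on generalizing a b with
  | _ d ih =>
  by_contra hlt
  -- the induced path `a, a + 1, a + 3, a + 5, …, b`
  obtain ⟨L, hL⟩ : ∃ L, L = (b - a) / 2 + 1 := ⟨_, rfl⟩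
  obtain ⟨t, ht0, htL, ht⟩ := hG.exists_adj_of_isInducedPathPow
    (hq.isInducedPathPow_one_comp (r := fun t => min b (max a (a + 2 * t - 1))) (L := L)
      (fun t _ => by omega) (fun t _ => by omega) (by omega))
    (by omega) (fun t _ => hs _ (by dsimp only; omega))
    (by simp only [Function.comp_apply]; rwa [show min b (max a (a + 2 * 0 - 1)) = a by omega])
    (by simp only [Function.comp_apply]; rwa [show min b (max a (a + 2 * L - 1)) = b by omega])
  obtain ⟨c, hc⟩ : ∃ c, c = min b (max a (a + 2 * t - 1)) := ⟨_, rfl⟩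
  rw [Function.comp_apply, ← hc] at ht
  rcases Nat.lt_or_ge b (a + 4) with hb4 | hb4
  · -- here `b = a + 3` and `c = a + 1`; the path `a, a + 2, a + 3` gives the third vertex of
    -- the triangle `{q (a + 1), q (a + 2), q (a + 3)}` seen by `s`
    obtain ⟨t', ht'0, ht'2, ht'⟩ := hG.exists_adj_of_isInducedPathPow
      (hq.isInducedPathPow_one_comp (r := fun t => a + t + min t 1) (L := 2)
        (fun t _ => by omega) (fun t _ => by omega) (by omega))
      le_rfl (fun t _ => hs _ (by dsimp only; omega)) (by simpa using ha)
      (by simpa [show a + 2 + 1 = b by omega] using hb')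
    obtain rfl : t' = 1 := by omega
    obtain rfl : c = a + 1 := by omega
    obtain rfl : b = a + 3 := by omega
    exact (hT (a + 1) (by omega)).not_adj_of_subset (x := q (a + 1)) (y := q (a + 2))
      (by simp [pathTriangle]) ht (by simpa using ht') hb'
  · -- `c` is an odd number of steps after `a`, so it is three steps away from `a` or from `b`
    rcases Nat.lt_or_ge (c + 2) b with hcb | hcb
    · exact hlt (by have := ih (b - c) (by omega) (by omega) hb ht hb' rfl; omega)
    · have := ih (c - a) (by omega) (by omega) (by omega) ha ht rfl
      omega

theorem extend (hG : IsChordal G) (hq : IsInducedPathPow G 2 (n + 3) q)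
    (hT : ∀ k, k + 2 < n + 3 → IsMaximalCliqueF G (pathTriangle q k))
    (hw : q (n + 3) ∉ pathTriangle q n)
    (h1 : G.Adj (q (n + 1)) (q (n + 3))) (h2 : G.Adj (q (n + 2)) (q (n + 3))) :
    IsInducedPathPow G 2 (n + 4) q := by
  have hout : ∀ i < n + 3, q i ≠ q (n + 3) := by
    intro i hi h
    by_cases hin : n ≤ i
    · obtain rfl | rfl | rfl : i = n ∨ i = n + 1 ∨ i = n + 2 := by omega
      all_goals exact hw (h ▸ by simp [pathTriangle])
    · exact hq.not_adj (i := i) (j := n + 2) hi (by omega) (by omega) (h ▸ h2.symm)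
  refine hq.succ hout fun i hi => ⟨fun h => ?_, fun h => ?_⟩
  · by_contra hlt
    rcases Nat.lt_or_ge i n with hin | hin
    · have := hq.le_add_two_of_adj hG hT hout (a := i) (b := n + 2) (by omega) (by omega) h h2
      omega
    · obtain rfl : i = n := by omega
      exact (hT i (by omega)).not_adj_of_subset
        (by simp [pathTriangle, Finset.insert_subset_iff]) h1 h2 h
  · obtain rfl | rfl : i = n + 1 ∨ i = n + 2 := by omega
    exacts [h1, h2]

theorem not_adj_succ_of_adj (hcf : ClawFree G) (hq : IsInducedPathPow G 2 n q)
    (hT : ∀ k, k + 2 < n → IsMaximalCliqueF G (pathTriangle q k)) (hs : ∀ i < n, q i ≠ s)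
    {j : ℕ} (hj : j + 3 < n) (h1 : G.Adj (q (j + 1)) s) : ¬ G.Adj (q (j + 2)) s := fun h2 =>
  hcf ⟨q (j + 1), q j, q (j + 3), s, hq.ne (by omega) (by omega) (by omega), hs j (by omega),
    hs (j + 3) hj, hq.adj (by omega) (by omega) (by omega), hq.adj (by omega) hj (by omega),
    h1, hq.not_adj (by omega) hj (by omega),
    (hT j (by omega)).not_adj_of_subset (by simp [pathTriangle, Finset.insert_subset_iff]) h1 h2,
    (hT (j + 1) (by omega)).not_adj_of_subset (by simp [pathTriangle]) h1 h2⟩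

theorem not_adj_add_two_of_adj (hG : IsChordal G) (hcf : ClawFree G)
    (hq : IsInducedPathPow G 2 n q)
    (hT : ∀ k, k + 2 < n → IsMaximalCliqueF G (pathTriangle q k)) (hs : ∀ i < n, q i ≠ s)
    {k : ℕ} (hk : k + 4 < n) (h2 : G.Adj (q (k + 2)) s) :
    ¬ G.Adj (q (k + 4)) s := fun h4 =>
  hcf ⟨q (k + 2), q k, q (k + 3), s, hq.ne (by omega) (by omega) (by omega), hs k (by omega),
    hs (k + 3) (by omega), hq.adj (by omega) (by omega) (by omega),
    hq.adj (by omega) (by omega) (by omega), h2, hq.not_adj (by omega) (by omega) (by omega),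
    fun h0 => by have := hq.le_add_two_of_adj hG hT hs (by omega) hk h0 h4; omega,
    (hT (k + 2) (by omega)).not_adj_of_subset (by simp [pathTriangle, Finset.insert_subset_iff])
      h2 h4⟩

end IsInducedPathPow

end Triangles

section Ladder

variable [DecidableEq V] {D : Set (Finset V)} {n : ℕ} {q : ℕ → V} {s : V}

def IsLadderIn (G : SimpleGraph V) (D : Set (Finset V)) (n : ℕ) (q : ℕ → V) : Prop :=
  IsInducedPathPow G 2 n q ∧ ∀ k, k + 2 < n → pathTriangle q k ∈ D

namespace IsLadderIn

theorem reverse (hq : IsLadderIn G D n q) : IsLadderIn G D n fun i => q (n - 1 - i) :=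
  ⟨hq.1.reverse, fun k hk => by
    rw [pathTriangle_reverse hk]
    exact hq.2 _ (by omega)⟩

theorem swap {i : ℕ} (hq : IsLadderIn G D (i + 3) q) (hi : i ≤ 1) :
    IsLadderIn G D (i + 3) (q ∘ Equiv.swap i (i + 1)) :=
  ⟨hq.1.swap hi, fun k hk => by
    rw [pathTriangle_comp_swap hi (by omega)]
    exact hq.2 k hk⟩

variable (hD : ∀ F ∈ D, IsMaximalCliqueF G F ∧ F.card = 3)
include hD

theorem isMaximalCliqueF (hq : IsLadderIn G D n q) {k : ℕ} (hk : k + 2 < n) :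
    IsMaximalCliqueF G (pathTriangle q k) :=
  (hD _ (hq.2 k hk)).1

theorem extend (hG : IsChordal G) (hq : IsLadderIn G D (n + 3) q)
    (hF : {q (n + 1), q (n + 2), s} ∈ D) (hs : s ∉ pathTriangle q n) :
    IsLadderIn G D (n + 4) (Function.update q (n + 3) s) := by
  set q' := Function.update q (n + 3) s
  have hagree : ∀ i < n + 3, q i = q' i := fun i hi =>
    (Function.update_of_ne (by omega) _ _).symm
  have htri : ∀ k ≤ n, pathTriangle q' k = pathTriangle q k := fun k hk => by
    simp only [pathTriangle, hagree k (by omega), hagree (k + 1) (by omega),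
      hagree (k + 2) (by omega)]
  have hq' : IsLadderIn G D (n + 3) q' :=
    ⟨hq.1.congr hagree, fun k hk => htri k (by omega) ▸ hq.2 k hk⟩
  have hs' : q' (n + 3) = s := Function.update_self ..
  have hlast : pathTriangle q' (n + 1) = {q (n + 1), q (n + 2), s} := by
    rw [← hs', hagree (n + 1) (by omega), hagree (n + 2) (by omega)]
    rfl
  have hne : ∀ i, n ≤ i → i ≤ n + 2 → q i ≠ s := fun i h1 h2 h => hs <| h ▸ by
    obtain rfl | rfl | rfl : i = n ∨ i = n + 1 ∨ i = n + 2 := by omega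
    all_goals simp [pathTriangle]
  have hcl := (hD _ hF).1.1
  refine ⟨hq'.1.extend hG (fun k hk => hq'.isMaximalCliqueF hD hk) ?_ ?_ ?_, fun k hk => ?_⟩
  · rwa [hs', htri n le_rfl]
  · rw [hs', ← hagree (n + 1) (by omega)]
    exact hcl (by simp) (by simp) (hne _ (by omega) (by omega))
  · rw [hs', ← hagree (n + 2) (by omega)]
    exact hcl (by simp) (by simp) (hne _ (by omega) (by omega))
  · rcases Nat.lt_or_ge k (n + 1) with hkn | hkn
    · exact hq'.2 k (by omega)
    · obtain rfl : k = n + 1 := by omega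
      rw [hlast]
      exact hF

theorem exists_extend_front (hG : IsChordal G) (hq : IsLadderIn G D (n + 3) q)
    (hF : {q 0, q 1, s} ∈ D) (hs : s ∉ pathTriangle q 0) :
    ∃ q', IsLadderIn G D (n + 4) q' := by
  refine ⟨_, hq.reverse.extend (s := s) hD hG ?_ ?_⟩
  · rwa [show n + 3 - 1 - (n + 1) = 1 by omega, show n + 3 - 1 - (n + 2) = 0 by omega,
      Finset.insert_comm]
  · rwa [pathTriangle_reverse (by omega), show n + 3 - 3 - n = 0 by omega]

theorem exists_extend_of_skip (hG : IsChordal G) (hcf : ClawFree G)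
    (hno : NoInducedCopy G threeTriangles) (hq : IsLadderIn G D n q) {k : ℕ} (hk : k + 2 < n)
    (hs : ∀ i < n, q i ≠ s) (hF : {q k, q (k + 2), s} ∈ D) (hk' : 1 ≤ k ∨ n = 3) :
    ∃ q', IsLadderIn G D (n + 1) q' := by
  have hcl := (hD _ hF).1.1
  have h0 : G.Adj (q k) s := hcl (by simp) (by simp) (hs k (by omega))
  have h2 : G.Adj (q (k + 2)) s := hcl (by simp) (by simp) (hs _ hk)
  have hT := fun j (hj : j + 2 < n) => hq.isMaximalCliqueF hD hj
  have h1 : ¬ G.Adj (q (k + 1)) s :=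
    (hT k hk).not_adj_of_subset (by simp [pathTriangle, Finset.insert_subset_iff]) h0 h2
  by_cases hk2 : 2 ≤ k
  · obtain ⟨j, rfl⟩ : ∃ j, k = j + 2 := ⟨k - 2, by omega⟩
    exact absurd h2 (hq.1.not_adj_add_two_of_adj hG hcf hT hs (by omega) h0)
  by_cases hn5 : 5 ≤ n
  · obtain rfl : k = 1 := by omega
    refine absurd hno ((hq.1.mono hn5).not_noInducedCopy_threeTriangles
      (fun i hi => hs i (by omega)) (fun h => ?_) h0 h1 h2 (fun h => ?_))
    · have := hq.1.le_add_two_of_adj hG hT hs (a := 0) (b := 3) (by omega) (by omega) h h2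
      omega
    · have := hq.1.le_add_two_of_adj hG hT hs (a := 1) (b := 4) (by omega) (by omega) h0 h
      omega
  -- the ladder is `q 0, …, q (k + 2)` with `k ≤ 1`: swapping `q k` and `q (k + 1)` makes
  -- `{q k, q (k + 2)}` its last rung
  obtain rfl : n = k + 3 := by omega
  refine ⟨_, (hq.swap (by omega)).extend (s := s) hD hG ?_ ?_⟩
  · simpa [Equiv.swap_apply_of_ne_of_ne] using hF
  · rw [pathTriangle_comp_swap (by omega) le_rfl]
    intro h
    simp only [pathTriangle, Finset.mem_insert, Finset.mem_singleton] at h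
    rcases h with h | h | h <;> exact hs _ (by omega) h.symm

theorem exists_pathTriangle_eq_of_card_inter_eq_two (hG : IsChordal G) (hcf : ClawFree G)
    (hno : NoInducedCopy G threeTriangles) (hq : IsLadderIn G D n q)
    (hmax : ∀ q', ¬ IsLadderIn G D (n + 1) q') {k : ℕ} (hk : k + 2 < n) {F : Finset V}
    (hF : F ∈ D) (hadj : (pathTriangle q k ∩ F).card = 2) :
    ∃ k', k' + 2 < n ∧ pathTriangle q k' = F := by
  by_contra! hnew
  obtain ⟨s, hsT, hFeq⟩ := exists_eq_of_card_inter_eq_two (hD F hF).2 hadj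
  have hs : ∀ i < n, q i ≠ s := by
    rintro i hi rfl
    rcases hFeq with rfl | rfl | rfl <;>
    · obtain ⟨k', hk', h⟩ := hq.1.exists_pathTriangle_eq (by omega) (by omega) hi (hD _ hF).1.1
        (hD _ hF).2
      exact hnew k' hk' h
  have hT := fun j (hj : j + 2 < n) => hq.isMaximalCliqueF hD hj
  have hcl := (hD _ hF).1.1
  obtain ⟨m, rfl⟩ : ∃ m, n = m + 3 := ⟨n - 3, by omega⟩
  rcases hFeq with rfl | rfl | rfl
  · rcases Nat.eq_zero_or_pos k with rfl | hk0
    · obtain ⟨q', hq'⟩ := hq.exists_extend_front hD hG hF hsT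
      exact hmax q' hq'
    · obtain ⟨j, rfl⟩ : ∃ j, k = j + 1 := ⟨k - 1, by omega⟩
      exact hq.1.not_adj_succ_of_adj hcf hT hs (j := j) (by omega)
        (hcl (by simp) (by simp) (hs _ (by omega))) (hcl (by simp) (by simp) (hs _ (by omega)))
  · rcases Nat.eq_zero_or_pos k with rfl | hk0
    · rcases Nat.eq_zero_or_pos m with rfl | hm0
      · obtain ⟨q', hq'⟩ := hq.exists_extend_of_skip hD hG hcf hno hk hs hF (.inr rfl)
        exact hmax q' hq'
      · obtain ⟨q', hq'⟩ := hq.reverse.exists_extend_of_skip hD hG hcf hno (k := m) (by omega)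
          (fun i hi => hs _ (by omega))
          (by rwa [show m + 3 - 1 - m = 2 by omega, show m + 3 - 1 - (m + 2) = 0 by omega,
            Finset.insert_comm]) (.inl hm0)
        exact hmax q' hq'
    · obtain ⟨q', hq'⟩ := hq.exists_extend_of_skip hD hG hcf hno hk hs hF (.inl hk0)
      exact hmax q' hq'
  · rcases Nat.lt_or_ge k m with hkm | hkm
    · exact hq.1.not_adj_succ_of_adj hcf hT hs (j := k) (by omega)
        (hcl (by simp) (by simp) (hs _ (by omega))) (hcl (by simp) (by simp) (hs _ (by omega)))
    · obtain rfl : k = m := by omega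
      exact hmax _ (hq.extend hD hG hF hsT)

end IsLadderIn

theorem Codim1Conn.subset_of_closed {S : Set (Finset V)} (hD : Codim1Conn D)
    {F₀ : Finset V} (h₀ : F₀ ∈ D) (h₀S : F₀ ∈ S)
    (hS : ∀ F ∈ S, ∀ F' ∈ D, (F ∩ F').card = 2 → F' ∈ S) : D ⊆ S := by
  intro F hF
  obtain ⟨t, c, hc0, hct, hcD, hcadj⟩ := hD F₀ h₀ F hF
  have hc : ∀ k, c k ∈ S := fun k =>
    Fin.induction (hc0 ▸ h₀S) (fun k hk => hS _ hk _ (hcD _) (hcadj k)) k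
  exact hct ▸ hc (Fin.last t)

variable (hD : ∀ F ∈ D, IsMaximalCliqueF G F ∧ F.card = 3)
include hD

theorem exists_isLadderIn_three {F : Finset V} (hF : F ∈ D) : ∃ q, IsLadderIn G D 3 q := by
  obtain ⟨a, b, c, hab, hac, hbc, rfl⟩ := Finset.card_eq_three.1 (hD _ hF).2
  have hcl := (hD _ hF).1.1
  have hab' : G.Adj a b := hcl (by simp) (by simp) hab
  have hac' : G.Adj a c := hcl (by simp) (by simp) hac
  have hbc' : G.Adj b c := hcl (by simp) (by simp) hbc
  refine ⟨fun i => if i = 0 then a else if i = 1 then b else c, ⟨fun i hi j hj h => ?_,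
    fun i hi j hj => ?_⟩, fun k hk => ?_⟩
  · simp only [Set.mem_Iio] at hi hj
    interval_cases i <;> interval_cases j <;> simp_all
  · interval_cases i <;> interval_cases j <;>
      simp [hab', hac', hbc', hab'.symm, hac'.symm, hbc'.symm]
  · obtain rfl : k = 0 := by omega
    simpa [pathTriangle] using hF

theorem exists_isLadderIn_covering [Fintype V] (hG : IsChordal G) (hcf : ClawFree G)
    (hno : NoInducedCopy G threeTriangles) (hconn : Codim1Conn D) (hne : D.Nonempty) :
    ∃ n q, 3 ≤ n ∧ IsLadderIn G D n q ∧
      ∀ F ∈ D, ∃ k, k + 2 < n ∧ pathTriangle q k = F := by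
  classical
  obtain ⟨F₀, hF₀⟩ := hne
  have hbound : ∀ n q, IsLadderIn G D n q → n ≤ Fintype.card V := fun n q hq => by
    simpa using Finset.card_le_card_of_injOn q (s := Finset.range n) (t := Finset.univ)
      (fun _ _ => Finset.mem_univ _) (by simpa [Set.InjOn] using hq.1.1)
  have h3 := exists_isLadderIn_three hD hF₀
  obtain ⟨q, hq⟩ := Nat.findGreatest_spec (P := fun n => ∃ q, IsLadderIn G D n q)
    (hbound 3 _ h3.choose_spec) h3
  set N := Nat.findGreatest (fun n => ∃ q, IsLadderIn G D n q) (Fintype.card V)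
  have hN : 3 ≤ N := Nat.le_findGreatest (hbound 3 _ h3.choose_spec) h3
  have hmax : ∀ q', ¬ IsLadderIn G D (N + 1) q' := fun q' h => by
    have := Nat.le_findGreatest (P := fun n => ∃ q, IsLadderIn G D n q) (hbound _ _ h) ⟨q', h⟩
    omega
  refine ⟨N, q, hN, hq, fun F hF => ?_⟩
  refine hconn.subset_of_closed (S := {F | ∃ k, k + 2 < N ∧ pathTriangle q k = F})
    (hq.2 0 (by omega)) ⟨0, by omega, rfl⟩ (fun F ⟨k, hk, hkF⟩ F' hF' h => ?_) hF
  exact hq.exists_pathTriangle_eq_of_card_inter_eq_two hD hG hcf hno hmax hk hF' (hkF ▸ h)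

end Ladder

end

theorem stmt_17_general {V : Type*} [Fintype V] [DecidableEq V]
    (G : SimpleGraph V) (hch : IsChordal G) (hcf : ClawFree G)
    (hno : NoInducedCopy G threeTriangles)
    (D : Set (Finset V)) (hD : ∀ F ∈ D, IsMaximalCliqueF G F ∧ F.card = 3)
    (hconn : Codim1Conn D) (hne : D.Nonempty) :
    ∃ (m : ℕ) (f : V → ℕ), 1 ≤ m ∧
      Set.InjOn f (⋃ F ∈ D, (↑F : Set V)) ∧
      (∀ F ∈ D, ∃ i, 1 ≤ i ∧ i ≤ m ∧ F.image f = {i, i + 1, i + 2}) ∧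
      (∀ i, 1 ≤ i → i ≤ m → ∃ F ∈ D, F.image f = {i, i + 1, i + 2}) := by
  obtain ⟨n, q, hn, hq, hcov⟩ := exists_isLadderIn_covering hD hch hcf hno hconn hne
  set f : V → ℕ := fun v => Function.invFunOn q (Set.Iio n) v + 1
  have hf : ∀ i < n, f (q i) = i + 1 := fun i hi => by
    simp only [f, hq.1.1.leftInvOn_invFunOn (show i ∈ Set.Iio n from hi)]
  have himage : ∀ k, k + 2 < n → (pathTriangle q k).image f = {k + 1, k + 1 + 1, k + 1 + 2} :=
    fun k hk => by simp [pathTriangle, hf k (by omega), hf (k + 1) (by omega), hf (k + 2) hk]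
  have hmem : ∀ v ∈ ⋃ F ∈ D, (↑F : Set V), ∃ i < n, q i = v := by
    simp only [Set.mem_iUnion]
    rintro v ⟨F, hF, hvF⟩
    obtain ⟨k, hk, rfl⟩ := hcov F hF
    obtain ⟨i, hi, rfl⟩ := exists_eq_of_mem_pathTriangle (Finset.mem_coe.1 hvF)
    exact ⟨i, by omega, rfl⟩
  refine ⟨n - 2, f, by omega, fun v hv w hw hvw => ?_, fun F hF => ?_, fun i hi hi' => ?_⟩
  · obtain ⟨i, hi, rfl⟩ := hmem v hv
    obtain ⟨j, hj, rfl⟩ := hmem w hw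
    rw [hf i hi, hf j hj] at hvw
    rw [show i = j by omega]
  · obtain ⟨k, hk, rfl⟩ := hcov F hF
    exact ⟨k + 1, by omega, by omega, himage k hk⟩
  · refine ⟨pathTriangle q (i - 1), hq.2 _ (by omega), ?_⟩
    rw [himage _ (by omega), Nat.sub_add_cancel hi]

/-- Let `G` be a chordal, claw-free graph with Koszul binomial edge
ideal, containing no induced copy of the triangle configuration of the non-Koszul
example, and let `D` be a set of 2-dimensional facets of the clique complex `Δ(G)`
which is connected in codimension 1.  Then the 1-skeleton of `D` is a 2-dimensional
line graph: its facets are exactly the consecutive triples `{i, i+1, i+2}`,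
`i = 1, …, m`, under a suitable relabeling `f` of the vertices of `D`. -/
theorem stmt_17 {K : Type*} [Field K] {V : Type*} [Fintype V] [DecidableEq V]
    (G : SimpleGraph V) (hch : IsChordal G) (hcf : ClawFree G)
    (hkoszul : GraphKoszul K G)
    (hno : NoInducedCopy G threeTriangles)
    (D : Set (Finset V)) (hD : ∀ F ∈ D, IsMaximalCliqueF G F ∧ F.card = 3)
    (hconn : Codim1Conn D) (hne : D.Nonempty) :
    ∃ (m : ℕ) (f : V → ℕ), 1 ≤ m ∧
      Set.InjOn f (⋃ F ∈ D, (↑F : Set V)) ∧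
      (∀ F ∈ D, ∃ i, 1 ≤ i ∧ i ≤ m ∧ F.image f = {i, i + 1, i + 2}) ∧
      (∀ i, 1 ≤ i → i ≤ m → ∃ F ∈ D, F.image f = {i, i + 1, i + 2}) :=
  stmt_17_general G hch hcf hno D hD hconn hne
end
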